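/- arXiv:2512.16142 — 13 statements merged into one kernel-verified Lean document; each statement's English description precedes it below -/
import Mathlib

section
/- Let X → Y → Z → X⟦1⟧ be a distinguished triangle in 𝒞 that is thin, i.e. m(Y) = m(X) + m(Z), with connecting morphism w : Z → X⟦1⟧. Let f : X → X' be any morphism, and let X' → W → Z → X'⟦1⟧ be any distinguished triangle whose connecting morphism Z → X'⟦1⟧ is the composite w ≫ f⟦1⟧. Then this second triangle is also thin: m(W) = m(X') + m(Z). -/
/-!
The cone of `(f, u) : X ⟶ X' ⊞ Y` is `W`: the octahedral axiom applied to `(f, u)` followed by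
the projection `X' ⊞ Y ⟶ Y` places that cone in a distinguished triangle `_ ⟶ Z ⟶ X'⟦1⟧` whose
middle map is `-(w ≫ f⟦1⟧')`, and so does `W` after rotating the second triangle. Subadditivity
on `X ⟶ X' ⊞ Y ⟶ W` together with thinness of the first triangle then gives
`m X' + m Z ≤ m W`, and the reverse inequality is subadditivity on the second triangle.
-/

open CategoryTheory Category Limits Pretriangulated

namespace CategoryTheory.Pretriangulated

variable {C : Type*} [Category C] [Preadditive C] [HasZeroObject C] [HasShift C ℤ]
  [∀ n : ℤ, (shiftFunctor C n).Additive] [Pretriangulated C]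

noncomputable def isoObj₁OfIso₂₃ (T₁ T₂ : Triangle C) (hT₁ : T₁ ∈ distTriang C)
    (hT₂ : T₂ ∈ distTriang C) (e₂ : T₁.obj₂ ≅ T₂.obj₂) (e₃ : T₁.obj₃ ≅ T₂.obj₃)
    (comm : T₁.mor₂ ≫ e₃.hom = e₂.hom ≫ T₂.mor₂) : T₁.obj₁ ≅ T₂.obj₁ :=
  (shiftFunctor C (1 : ℤ)).preimageIso <| Triangle.π₃.mapIso <|
    isoTriangleOfIso₁₂ _ _ (rot_of_distTriang _ hT₁) (rot_of_distTriang _ hT₂) e₂ e₃ comm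

lemma exists_distTriang_of_biprod_lift_cone [IsTriangulated C] {X Y Z X' Q : C} {u : X ⟶ Y}
    {v : Y ⟶ Z} {w : Z ⟶ X⟦(1 : ℤ)⟧} (hT : Triangle.mk u v w ∈ distTriang C) (f : X ⟶ X')
    {p : X' ⊞ Y ⟶ Q} {q : Q ⟶ X⟦(1 : ℤ)⟧} (hQ : Triangle.mk (biprod.lift f u) p q ∈ distTriang C) :
    ∃ (g : Q ⟶ Z) (h : X'⟦(1 : ℤ)⟧ ⟶ Q⟦(1 : ℤ)⟧),
      Triangle.mk g (-(w ≫ f⟦(1 : ℤ)⟧')) h ∈ distTriang C := by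
  have hsplit : Triangle.mk (biprod.snd : X' ⊞ Y ⟶ Y) 0 (-(biprod.inl : X' ⟶ X' ⊞ Y)⟦(1 : ℤ)⟧') ∈
      distTriang C :=
    rot_of_distTriang _ (binaryBiproductTriangle_distinguished X' Y)
  let oct := Triangulated.someOctahedron (biprod.lift_snd f u) hQ hsplit hT
  have hm₃ : oct.m₃ = -(w ≫ f⟦(1 : ℤ)⟧') := by
    have h := oct.comm₄ =≫ (biprod.fst : X' ⊞ Y ⟶ X')⟦(1 : ℤ)⟧'
    simp only [assoc, Preadditive.neg_comp, Preadditive.comp_neg, ← Functor.map_comp,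
      biprod.lift_fst, biprod.inl_fst, Functor.map_id, comp_id] at h
    rw [h, neg_neg]
  exact ⟨oct.m₁, _, hm₃ ▸ oct.mem⟩

lemma exists_distTriang_biprod_lift [IsTriangulated C] {X Y Z X' W : C} {u : X ⟶ Y}
    {v : Y ⟶ Z} {w : Z ⟶ X⟦(1 : ℤ)⟧} (hT : Triangle.mk u v w ∈ distTriang C) (f : X ⟶ X')
    {a : X' ⟶ W} {b : W ⟶ Z} (hT' : Triangle.mk a b (w ≫ f⟦(1 : ℤ)⟧') ∈ distTriang C) :
    ∃ (p : X' ⊞ Y ⟶ W) (q : W ⟶ X⟦(1 : ℤ)⟧), Triangle.mk (biprod.lift f u) p q ∈ distTriang C := by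
  obtain ⟨Q, p, q, hQ⟩ := distinguished_cocone_triangle (biprod.lift f u)
  obtain ⟨g, h, hg⟩ := exists_distTriang_of_biprod_lift_cone hT f hQ
  have hT'rot : Triangle.mk b (w ≫ f⟦(1 : ℤ)⟧') (-a⟦(1 : ℤ)⟧') ∈ distTriang C :=
    rot_of_distTriang _ hT'
  let e : Q ≅ W := isoObj₁OfIso₂₃ _ _ hg hT'rot
    (⟨-𝟙 Z, -𝟙 Z, by simp, by simp⟩ : Z ≅ Z) (Iso.refl _) (by dsimp [Triangle.mk]; simp)
  exact ⟨p ≫ e.hom, e.inv ≫ q, isomorphic_distinguished _ hQ _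
    (Triangle.isoMk _ _ (Iso.refl _) (Iso.refl _) e.symm (by dsimp [Triangle.mk]; simp)
      (by dsimp [Triangle.mk]; simp) (by dsimp [Triangle.mk]; simp))⟩

end CategoryTheory.Pretriangulated

/-- If `X → Y → Z → X⟦1⟧` is a thin distinguished triangle (i.e. `m Y = m X + m Z`)
with connecting morphism `w : Z ⟶ X⟦1⟧`, `f : X ⟶ X'` is any morphism, and
`X' → W → Z → X'⟦1⟧` is any distinguished triangle with connecting morphism
`w ≫ f⟦1⟧'`, then the second triangle is also thin: `m W = m X' + m Z`. -/
theorem thin_ET1 {C : Type*} [Category C] [Preadditive C] [HasZeroObject C]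
    [HasShift C ℤ] [∀ n : ℤ, (CategoryTheory.shiftFunctor C n).Additive]
    [Pretriangulated C] [IsTriangulated C] [HasBinaryBiproducts C]
    (m : C → ℝ)
    (hiso : ∀ {X Y : C}, (X ≅ Y) → m X = m Y)
    (hadd : ∀ X Y : C, m (X ⊞ Y) = m X + m Y)
    (hshift : ∀ X : C, m (X⟦(1 : ℤ)⟧) = m X)
    (htri : ∀ T : Triangle C, T ∈ (distTriang C) → m T.obj₂ ≤ m T.obj₁ + m T.obj₃)
    {X Y Z X' W : C} (u : X ⟶ Y) (v : Y ⟶ Z) (w : Z ⟶ X⟦(1 : ℤ)⟧)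
    (hT : Triangle.mk u v w ∈ distTriang C)
    (hthin : m Y = m X + m Z)
    (f : X ⟶ X') (a : X' ⟶ W) (b : W ⟶ Z)
    (hT' : Triangle.mk a b (w ≫ f⟦(1 : ℤ)⟧') ∈ distTriang C) :
    m W = m X' + m Z := by
  obtain ⟨p, q, hpq⟩ := exists_distTriang_biprod_lift hT f hT'
  have hle : m (X' ⊞ Y) ≤ m X + m W := htri _ hpq
  have hge : m W ≤ m X' + m Z := htri _ hT'
  rw [hadd] at hle
  linarith
end

section
/- Let X → Y → Z → X⟦1⟧ be a distinguished triangle in 𝒞 that is thin, i.e. m(Y) = m(X) + m(Z), with connecting morphism w : Z → X⟦1⟧. Let g : Z' → Z be any morphism, and let X → W → Z' → X⟦1⟧ be any distinguished triangle whose connecting morphism Z' → X⟦1⟧ is the composite g ≫ w. Then this second triangle is also thin: m(W) = m(X) + m(Z'). -/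
open CategoryTheory Category Limits Pretriangulated

/-!
The triangle inequality gives `m W ≤ m X + m Z'`. Conversely, the octahedral axiom applied to
`Y ⟶ Y ⊞ Z' ⟶ Z` (with `Y ⟶ Z` the map `v`, whose cone is `X⟦1⟧`) shows that the cone of
`(v, g) : Y ⊞ Z' ⟶ Z` is a cone of `g ≫ w`, i.e. `W⟦1⟧`. The triangle inequality for
`Y ⊞ Z' ⟶ Z ⟶ W⟦1⟧` then gives `m Y + m Z' ≤ m Z + m W`, and thinness `m Y = m X + m Z` turns
this into `m X + m Z' ≤ m W`.
-/

namespace CategoryTheory.Pretriangulated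

variable {C : Type*} [Category C] [Preadditive C] [HasZeroObject C] [HasShift C ℤ]
  [∀ n : ℤ, (shiftFunctor C n).Additive] [Pretriangulated C]

lemma nonempty_iso_shift_of_distTriang_biprod_desc [IsTriangulated C] [HasBinaryBiproducts C]
    {X Y Z Z' W V : C} {u : X ⟶ Y} {v : Y ⟶ Z} {w : Z ⟶ X⟦(1 : ℤ)⟧}
    (hT : Triangle.mk u v w ∈ distTriang C) {g : Z' ⟶ Z} {a : X ⟶ W} {b : W ⟶ Z'}
    (hT' : Triangle.mk a b (g ≫ w) ∈ distTriang C)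
    {p : Z ⟶ V} {q : V ⟶ (Y ⊞ Z')⟦(1 : ℤ)⟧}
    (hV : Triangle.mk (biprod.desc v g) p q ∈ distTriang C) :
    Nonempty (V ≅ W⟦(1 : ℤ)⟧) := by
  have hsplit : Triangle.mk (biprod.inl : Y ⟶ Y ⊞ Z') biprod.snd 0 ∈ distTriang C :=
    binaryBiproductTriangle_distinguished Y Z'
  have hrot : Triangle.mk v w (-u⟦(1 : ℤ)⟧') ∈ distTriang C := rot_of_distTriang _ hT
  let O := Triangulated.someOctahedron (biprod.inl_desc v g) hsplit hV hrot
  have hm₁ : O.m₁ = g ≫ w := by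
    simpa using biprod.inr ≫= O.comm₁
  have e : Triangle.mk O.m₁ O.m₃ _ ≅ (Triangle.mk a b (g ≫ w)).rotate.rotate :=
    isoTriangleOfIso₁₂ _ _ O.mem (rot_of_distTriang _ (rot_of_distTriang _ hT'))
      (Iso.refl _) (Iso.refl _) ((comp_id _).trans (hm₁.trans (id_comp _).symm))
  exact ⟨Triangle.π₃.mapIso e⟩

variable (m : C → ℝ) (hshift : ∀ X : C, m (X⟦(1 : ℤ)⟧) = m X)
  (htri : ∀ T : Triangle C, T ∈ (distTriang C) → m T.obj₂ ≤ m T.obj₁ + m T.obj₃)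
include hshift htri

lemma obj₁_le_of_distTriang {T : Triangle C} (hT : T ∈ distTriang C) :
    m T.obj₁ ≤ m T.obj₂ + m T.obj₃ := by
  have h := htri _ (rot_of_distTriang _ (rot_of_distTriang _ hT))
  simp only [Triangle.rotate_obj₁, Triangle.rotate_obj₂, Triangle.rotate_obj₃, hshift] at h
  linarith

end CategoryTheory.Pretriangulated

/-- If `X → Y → Z → X⟦1⟧` is a thin distinguished triangle (i.e. `m Y = m X + m Z`)
with connecting morphism `w : Z ⟶ X⟦1⟧`, `g : Z' ⟶ Z` is any morphism, and
`X → W → Z' → X⟦1⟧` is any distinguished triangle with connecting morphism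
`g ≫ w`, then the second triangle is also thin: `m W = m X + m Z'`. -/
theorem thin_ET1op {C : Type*} [Category C] [Preadditive C] [HasZeroObject C]
    [HasShift C ℤ] [∀ n : ℤ, (CategoryTheory.shiftFunctor C n).Additive]
    [Pretriangulated C] [IsTriangulated C] [HasBinaryBiproducts C]
    (m : C → ℝ)
    (hiso : ∀ {X Y : C}, (X ≅ Y) → m X = m Y)
    (hadd : ∀ X Y : C, m (X ⊞ Y) = m X + m Y)
    (hshift : ∀ X : C, m (X⟦(1 : ℤ)⟧) = m X)
    (htri : ∀ T : Triangle C, T ∈ (distTriang C) → m T.obj₂ ≤ m T.obj₁ + m T.obj₃)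
    {X Y Z Z' W : C} (u : X ⟶ Y) (v : Y ⟶ Z) (w : Z ⟶ X⟦(1 : ℤ)⟧)
    (hT : Triangle.mk u v w ∈ distTriang C)
    (hthin : m Y = m X + m Z)
    (g : Z' ⟶ Z) (a : X ⟶ W) (b : W ⟶ Z')
    (hT' : Triangle.mk a b (g ≫ w) ∈ distTriang C) :
    m W = m X + m Z' := by
  have upper : m W ≤ m X + m Z' := htri _ hT'
  obtain ⟨V, p, q, hV⟩ := distinguished_cocone_triangle (biprod.desc v g : Y ⊞ Z' ⟶ Z)
  obtain ⟨e⟩ := nonempty_iso_shift_of_distTriang_biprod_desc hT hT' hV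
  have lower : m (Y ⊞ Z') ≤ m Z + m V := obj₁_le_of_distTriang m hshift htri hV
  rw [hadd, hiso e, hshift] at lower
  linarith
end

section
/- Suppose X → Y → Z' → X⟦1⟧ and Y → Z → X' → Y⟦1⟧ are distinguished triangles in 𝒞 that are both thin, i.e. m(Y) = m(X) + m(Z') and m(Z) = m(Y) + m(X'). Suppose further that Y' is an object fitting into distinguished triangles X → Z → Y' → X⟦1⟧ and Z' → Y' → X' → Z'⟦1⟧ (as produced by the octahedral axiom). Then both of these triangles are thin: m(Z) = m(X) + m(Y') and m(Y') = m(Z') + m(X'). -/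
open CategoryTheory Category Limits Pretriangulated

/-- (ET4) for thin triangles: if `X → Y → Z'` and `Y → Z → X'` are thin distinguished
triangles and `Y'` fits into distinguished triangles `X → Z → Y'` and `Z' → Y' → X'`
(as produced by the octahedral axiom), then both of the latter triangles are thin. -/
theorem thin_ET4 {C : Type*} [Category C] [Preadditive C] [HasZeroObject C]
    [HasShift C ℤ] [∀ n : ℤ, (CategoryTheory.shiftFunctor C n).Additive]
    [Pretriangulated C] [IsTriangulated C] [HasBinaryBiproducts C]
    (m : C → ℝ)
    (hiso : ∀ {X Y : C}, (X ≅ Y) → m X = m Y)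
    (hadd : ∀ X Y : C, m (X ⊞ Y) = m X + m Y)
    (hshift : ∀ X : C, m (X⟦(1 : ℤ)⟧) = m X)
    (htri : ∀ T : Triangle C, T ∈ (distTriang C) → m T.obj₂ ≤ m T.obj₁ + m T.obj₃)
    {X Y Z X' Z' Y' : C}
    (u₁ : X ⟶ Y) (v₁ : Y ⟶ Z') (w₁ : Z' ⟶ X⟦(1 : ℤ)⟧)
    (hT₁ : Triangle.mk u₁ v₁ w₁ ∈ distTriang C)
    (hthin₁ : m Y = m X + m Z')
    (u₂ : Y ⟶ Z) (v₂ : Z ⟶ X') (w₂ : X' ⟶ Y⟦(1 : ℤ)⟧)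
    (hT₂ : Triangle.mk u₂ v₂ w₂ ∈ distTriang C)
    (hthin₂ : m Z = m Y + m X')
    (u₃ : X ⟶ Z) (v₃ : Z ⟶ Y') (w₃ : Y' ⟶ X⟦(1 : ℤ)⟧)
    (hT₃ : Triangle.mk u₃ v₃ w₃ ∈ distTriang C)
    (u₄ : Z' ⟶ Y') (v₄ : Y' ⟶ X') (w₄ : X' ⟶ Z'⟦(1 : ℤ)⟧)
    (hT₄ : Triangle.mk u₄ v₄ w₄ ∈ distTriang C) :
    m Z = m X + m Y' ∧ m Y' = m Z' + m X' := by
  have h₃ := htri _ hT₃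
  have h₄ := htri _ hT₄
  simp only [Triangle.mk_obj₁, Triangle.mk_obj₂, Triangle.mk_obj₃] at h₃ h₄
  constructor <;> linarith
end

section
/- Suppose X → Y → Z' → X⟦1⟧ and X' → Z → Y → X'⟦1⟧ are distinguished triangles in 𝒞 that are both thin, i.e. m(Y) = m(X) + m(Z') and m(Z) = m(X') + m(Y). Suppose further that Y' is an object fitting into distinguished triangles X' → Y' → X → X'⟦1⟧ and Y' → Z → Z' → Y'⟦1⟧ (as produced by the dual octahedral axiom). Then both of these triangles are thin: m(Y') = m(X') + m(X) and m(Z) = m(Y') + m(Z'). -/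
open CategoryTheory Category Limits Pretriangulated

/-- (ET4op) for thin triangles: if `X → Y → Z'` and `X' → Z → Y` are thin distinguished
triangles and `Y'` fits into distinguished triangles `X' → Y' → X` and `Y' → Z → Z'`
(as produced by the dual octahedral axiom), then both of the latter triangles are thin. -/
theorem thin_ET4op {C : Type*} [Category C] [Preadditive C] [HasZeroObject C]
    [HasShift C ℤ] [∀ n : ℤ, (CategoryTheory.shiftFunctor C n).Additive]
    [Pretriangulated C] [IsTriangulated C] [HasBinaryBiproducts C]
    (m : C → ℝ)
    (hiso : ∀ {X Y : C}, (X ≅ Y) → m X = m Y)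
    (hadd : ∀ X Y : C, m (X ⊞ Y) = m X + m Y)
    (hshift : ∀ X : C, m (X⟦(1 : ℤ)⟧) = m X)
    (htri : ∀ T : Triangle C, T ∈ (distTriang C) → m T.obj₂ ≤ m T.obj₁ + m T.obj₃)
    {X Y Z X' Z' Y' : C}
    (u₁ : X ⟶ Y) (v₁ : Y ⟶ Z') (w₁ : Z' ⟶ X⟦(1 : ℤ)⟧)
    (hT₁ : Triangle.mk u₁ v₁ w₁ ∈ distTriang C)
    (hthin₁ : m Y = m X + m Z')
    (u₂ : X' ⟶ Z) (v₂ : Z ⟶ Y) (w₂ : Y ⟶ X'⟦(1 : ℤ)⟧)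
    (hT₂ : Triangle.mk u₂ v₂ w₂ ∈ distTriang C)
    (hthin₂ : m Z = m X' + m Y)
    (u₃ : X' ⟶ Y') (v₃ : Y' ⟶ X) (w₃ : X ⟶ X'⟦(1 : ℤ)⟧)
    (hT₃ : Triangle.mk u₃ v₃ w₃ ∈ distTriang C)
    (u₄ : Y' ⟶ Z) (v₄ : Z ⟶ Z') (w₄ : Z' ⟶ Y'⟦(1 : ℤ)⟧)
    (hT₄ : Triangle.mk u₄ v₄ w₄ ∈ distTriang C) :
    m Y' = m X' + m X ∧ m Z = m Y' + m Z' := by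
  have h₃ : m Y' ≤ m X' + m X := htri _ hT₃
  have h₄ : m Z ≤ m Y' + m Z' := htri _ hT₄
  -- The thin triangles give `m Z = m X' + m X + m Z'`, so the chain
  -- `m Z ≤ m Y' + m Z' ≤ m X' + m X + m Z'` starts and ends at the same value.
  constructor <;> linarith
end

section
/- For all integers i, j with 2 ≤ i < j ≤ n+1, one has Γ(e_{i,j}) = x · e_{i−1,j−1}. -/
open Finset

/-- `compSeq σ a L = σ (a + L - 1) ∘ ⋯ ∘ σ (a + 1) ∘ σ a` (the identity if `L = 0`).
In particular `compSeq σ 1 n = σ n ∘ ⋯ ∘ σ 1`. -/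
def compSeq {R : Type*} [CommSemiring R] {V : Type*} [AddCommMonoid V] [Module R V]
    (σ : ℕ → Module.End R V) (a : ℕ) : ℕ → Module.End R V
  | 0 => 1
  | L + 1 => σ (a + L) * compSeq σ a L

lemma compSeq_add {R : Type*} [CommSemiring R] {V : Type*} [AddCommMonoid V] [Module R V]
    (σ : ℕ → Module.End R V) (a L M : ℕ) :
    compSeq σ a (L + M) = compSeq σ (a + L) M * compSeq σ a L := by
  induction M with
  | zero => simp [compSeq]
  | succ M ih =>
    show σ (a + (L + M)) * compSeq σ a (L + M) = (σ (a + L + M) * compSeq σ (a + L) M) * compSeq σ a L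
    rw [ih, ← mul_assoc, Nat.add_assoc]

lemma compSeq_one {R : Type*} [CommSemiring R] {V : Type*} [AddCommMonoid V] [Module R V]
    (σ : ℕ → Module.End R V) (a : ℕ) : compSeq σ a 1 = σ a := by
  show σ (a + 0) * 1 = σ a
  rw [mul_one, Nat.add_zero]

lemma compSeq_fix {R : Type*} [CommSemiring R] {V : Type*} [AddCommMonoid V] [Module R V]
    (σ : ℕ → Module.End R V) (a L : ℕ) (v : V)
    (h : ∀ k, a ≤ k → k < a + L → σ k v = v) :
    compSeq σ a L v = v := by
  induction L with
  | zero => rfl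
  | succ L ih =>
    show σ (a + L) (compSeq σ a L v) = v
    rw [ih (fun k hk hk' => h k hk (by omega)), h (a + L) (by omega) (by omega)]

/-- For the LKB generators `σ_k` (in the Paoluzzi–Paris conventions) acting on the
free module with basis `e i j`, `1 ≤ i < j ≤ n+1`, the composite
`Γ = σ_n ∘ ⋯ ∘ σ_1` satisfies `Γ (e i j) = x • e (i-1) (j-1)` for `2 ≤ i < j ≤ n+1`. -/
theorem gamma_on_e_of_two_le {R : Type*} [CommRing R] (x y : R)
    {V : Type*} [AddCommGroup V] [Module R V]
    (n : ℕ) (hn : 1 ≤ n)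
    (e : ℕ → ℕ → V) (σ : ℕ → Module.End R V)
    (hσ : ∀ k i j, 1 ≤ k → k ≤ n → 1 ≤ i → i < j → j ≤ n + 1 →
      σ k (e i j) =
        if i = k + 1 then x • e k j + (1 - x) • e i j
        else if k = i ∧ i + 1 < j then e (i + 1) j - (x * y * (x - 1)) • e k (k + 1)
        else if k = i ∧ j = i + 1 then -((x ^ 2 * y) • e k (k + 1))
        else if i < k ∧ k + 1 < j then e i j - (y * (x - 1) ^ 2) • e k (k + 1)
        else if i < k ∧ k + 1 = j then e i (j - 1) - (x * y * (x - 1)) • e k (k + 1)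
        else if k = j then x • e i (j + 1) + (1 - x) • e i j
        else e i j)
    (i j : ℕ) (hi : 2 ≤ i) (hij : i < j) (hj : j ≤ n + 1) :
    compSeq σ 1 n (e i j) = x • e (i - 1) (j - 1) := by
  -- Phase 1: σ_1, …, σ_{i-2} fix e i j
  have h1 : compSeq σ 1 (i - 2) (e i j) = e i j := by
    refine compSeq_fix σ 1 (i - 2) _ (fun k hk hk' => ?_)
    rw [hσ k i j hk (by omega) (by omega) hij hj,
      if_neg (by omega), if_neg (by omega), if_neg (by omega),
      if_neg (by omega), if_neg (by omega), if_neg (by omega)]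
  -- Phase 2: σ_{i-1}
  have h2 : σ (i - 1) (e i j) = x • e (i - 1) j + (1 - x) • e i j := by
    rw [hσ (i - 1) i j (by omega) (by omega) (by omega) hij hj, if_pos (by omega)]
  -- Phase 3: σ_i, …, σ_{j-2}
  have h3 : ∀ m, m ≤ j - 1 - i →
      compSeq σ i m (x • e (i - 1) j + (1 - x) • e i j)
        = x • e (i - 1) j + (1 - x) • e (i + m) j := by
    intro m hm
    induction m with
    | zero => simp [compSeq]
    | succ m ih =>
      show σ (i + m) (compSeq σ i m _) = _
      rw [ih (by omega), map_add, map_smul, map_smul,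
        hσ (i + m) (i - 1) j (by omega) (by omega) (by omega) (by omega) hj,
        if_neg (by omega), if_neg (by omega), if_neg (by omega), if_pos (by omega),
        hσ (i + m) (i + m) j (by omega) (by omega) (by omega) (by omega) hj,
        if_neg (by omega), if_pos (by omega),
        show i + (m + 1) = i + m + 1 by omega]
      module
  -- Phase 4: σ_{j-1}
  have h4 : σ (j - 1) (x • e (i - 1) j + (1 - x) • e (j - 1) j)
      = x • e (i - 1) (j - 1) := by
    rw [map_add, map_smul, map_smul,
      hσ (j - 1) (i - 1) j (by omega) (by omega) (by omega) (by omega) hj,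
      if_neg (by omega), if_neg (by omega), if_neg (by omega), if_neg (by omega),
      if_pos (by omega),
      hσ (j - 1) (j - 1) j (by omega) (by omega) (by omega) (by omega) hj,
      if_neg (by omega), if_neg (by omega), if_pos (by omega),
      show j - 1 + 1 = j by omega]
    module
  -- Phase 5: σ_j, …, σ_n fix e (i-1) (j-1)
  have h5 : compSeq σ j (n + 1 - j) (x • e (i - 1) (j - 1)) = x • e (i - 1) (j - 1) := by
    rw [map_smul]
    congr 1
    refine compSeq_fix σ j (n + 1 - j) _ (fun k hk hk' => ?_)
    rw [hσ k (i - 1) (j - 1) (by omega) (by omega) (by omega) (by omega) (by omega),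
      if_neg (by omega), if_neg (by omega), if_neg (by omega),
      if_neg (by omega), if_neg (by omega), if_neg (by omega)]
  -- Assemble
  rw [show n = (i - 2) + (1 + ((j - 1 - i) + (1 + (n + 1 - j)))) from by omega,
    compSeq_add, Module.End.mul_apply, h1,
    show 1 + (i - 2) = i - 1 from by omega,
    compSeq_add, Module.End.mul_apply, compSeq_one, h2,
    show i - 1 + 1 = i from by omega,
    compSeq_add, Module.End.mul_apply, h3 (j - 1 - i) le_rfl,
    show i + (j - 1 - i) = j - 1 from by omega,
    compSeq_add, Module.End.mul_apply, compSeq_one, h4,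
    show j - 1 + 1 = j from by omega, h5]
end

section
/- For every integer j with 2 ≤ j ≤ n+1, one has Γ(e_{1,j}) = Σ_{r=1}^{j−2} Σ_{s=r+1}^{n} (x−1)² x^{s−r} y · e_{r,s} − Σ_{r=1}^{j−2} (x−1) x^{n+1−r} y · e_{r,n+1} − x^{n−j+3} y · e_{j−1,n+1} + Σ_{s=j}^{n} x^{s−j+2} y (x−1) · e_{j−1,s} (where empty sums are zero). -/
open Finset

/-- For the LKB generators `σ_k` (Paoluzzi–Paris conventions) acting on the free module
with basis `e i j`, `1 ≤ i < j ≤ n+1`, the composite `Γ = σ_n ∘ ⋯ ∘ σ_1` satisfies, for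
`2 ≤ j ≤ n+1`,
`Γ (e 1 j) = Σ_{r=1}^{j-2} Σ_{s=r+1}^{n} (x-1)² x^{s-r} y • e r s
  - Σ_{r=1}^{j-2} (x-1) x^{n+1-r} y • e r (n+1) - x^{n-j+3} y • e (j-1) (n+1)
  + Σ_{s=j}^{n} x^{s-j+2} y (x-1) • e (j-1) s`. -/
theorem gamma_on_e_one {R : Type*} [CommRing R] (x y : R)
    {V : Type*} [AddCommGroup V] [Module R V]
    (n : ℕ) (hn : 1 ≤ n)
    (e : ℕ → ℕ → V) (σ : ℕ → Module.End R V)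
    (hσ : ∀ k i j, 1 ≤ k → k ≤ n → 1 ≤ i → i < j → j ≤ n + 1 →
      σ k (e i j) =
        if i = k + 1 then x • e k j + (1 - x) • e i j
        else if k = i ∧ i + 1 < j then e (i + 1) j - (x * y * (x - 1)) • e k (k + 1)
        else if k = i ∧ j = i + 1 then -((x ^ 2 * y) • e k (k + 1))
        else if i < k ∧ k + 1 < j then e i j - (y * (x - 1) ^ 2) • e k (k + 1)
        else if i < k ∧ k + 1 = j then e i (j - 1) - (x * y * (x - 1)) • e k (k + 1)
        else if k = j then x • e i (j + 1) + (1 - x) • e i j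
        else e i j)
    (j : ℕ) (hj2 : 2 ≤ j) (hj : j ≤ n + 1) :
    compSeq σ 1 n (e 1 j) =
      (∑ r ∈ Finset.Icc 1 (j - 2), ∑ s ∈ Finset.Icc (r + 1) n,
          ((x - 1) ^ 2 * x ^ (s - r) * y) • e r s)
      - (∑ r ∈ Finset.Icc 1 (j - 2), ((x - 1) * x ^ (n + 1 - r) * y) • e r (n + 1))
      - (x ^ (n + 3 - j) * y) • e (j - 1) (n + 1)
      + ∑ s ∈ Finset.Icc j n, (x ^ (s + 2 - j) * y * (x - 1)) • e (j - 1) s := by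
  obtain ⟨p, rfl⟩ : ∃ p, j = p + 2 := ⟨j - 2, by omega⟩
  have hpn : p + 1 ≤ n := by omega
  -- evaluation helper lemmas
  have hfix : ∀ k i s, 1 ≤ i → i < s → s < k → k ≤ n → σ k (e i s) = e i s := by
    intro k i s h1 h2 h3 h4
    rw [hσ k i s (by omega) h4 h1 h2 (by omega)]
    split_ifs <;> first | rfl | omega
  have hspread : ∀ k i, 1 ≤ i → i < k → k ≤ n →
      σ k (e i k) = x • e i (k + 1) + (1 - x) • e i k := by
    intro k i h1 h2 h3
    rw [hσ k i k (by omega) h3 h1 h2 (by omega)]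
    split_ifs <;> first | rfl | omega
  have hhead : ∀ k q, 1 ≤ k → k ≤ n → k + 1 < q → q ≤ n + 1 →
      σ k (e k q) = e (k + 1) q - (x * y * (x - 1)) • e k (k + 1) := by
    intro k q h1 h2 h3 h4
    rw [hσ k k q h1 h2 h1 (by omega) h4]
    split_ifs <;> first | rfl | omega
  have hkill : ∀ k, 1 ≤ k → k ≤ n → σ k (e k (k + 1)) = -((x ^ 2 * y) • e k (k + 1)) := by
    intro k h1 h2
    rw [hσ k k (k + 1) h1 h2 h1 (by omega) (by omega)]
    split_ifs <;> first | rfl | omega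
  -- the debris-spreading step: applying σ (m+1) to the debris attached to row r
  have hdebris : ∀ m r, 1 ≤ r → r ≤ m → m + 1 ≤ n →
      σ (m + 1) ((∑ s ∈ Icc (r + 1) m, ((x - 1) ^ 2 * x ^ (s - r) * y) • e r s)
          - ((x - 1) * x ^ (m + 1 - r) * y) • e r (m + 1))
      = (∑ s ∈ Icc (r + 1) (m + 1), ((x - 1) ^ 2 * x ^ (s - r) * y) • e r s)
          - ((x - 1) * x ^ (m + 2 - r) * y) • e r (m + 2) := by
    intro m r hr1 hrm hmn
    rw [map_sub, map_smul, map_sum]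
    have hss : (∑ s ∈ Icc (r + 1) m, σ (m + 1) (((x - 1) ^ 2 * x ^ (s - r) * y) • e r s))
        = ∑ s ∈ Icc (r + 1) m, ((x - 1) ^ 2 * x ^ (s - r) * y) • e r s := by
      refine Finset.sum_congr rfl fun s hs => ?_
      simp only [Finset.mem_Icc] at hs
      rw [map_smul, hfix (m + 1) r s (by omega) (by omega) (by omega) (by omega)]
    rw [hss, hspread (m + 1) r (by omega) (by omega) (by omega),
      Finset.sum_Icc_succ_top (show r + 1 ≤ m + 1 by omega),
      show m + 2 - r = m - r + 1 + 1 from by omega,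
      show m + 1 - r = m - r + 1 from by omega]
    module
  -- Phase 1
  have phase1 : ∀ m, m ≤ p → compSeq σ 1 m (e 1 (p + 2)) =
      e (m + 1) (p + 2) + ∑ r ∈ Icc 1 m, ((∑ s ∈ Icc (r + 1) m, ((x - 1) ^ 2 * x ^ (s - r) * y) • e r s)
        - ((x - 1) * x ^ (m + 1 - r) * y) • e r (m + 1)) := by
    intro m
    induction m with
    | zero =>
        intro _
        rw [Finset.Icc_eq_empty (by omega), Finset.sum_empty, add_zero]
        rfl
    | succ m ih =>
        intro hm
        have hcomp : compSeq σ 1 (m + 1) = σ (1 + m) * compSeq σ 1 m := rfl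
        rw [hcomp, Module.End.mul_apply, show 1 + m = m + 1 from by omega, ih (by omega),
          map_add, map_sum,
          Finset.sum_congr rfl (fun r hr => hdebris m r (by simp only [Finset.mem_Icc] at hr; omega)
            (by simp only [Finset.mem_Icc] at hr; omega) (by omega)),
          hhead (m + 1) (p + 2) (by omega) (by omega) (by omega) (by omega),
          Finset.sum_Icc_succ_top (show (1:ℕ) ≤ m + 1 by omega),
          Finset.Icc_eq_empty (show ¬ (m + 1 + 1 ≤ m + 1) by omega), Finset.sum_empty,
          show m + 1 + 1 = m + 2 from by omega,
          show m + 2 - (m + 1) = 1 from by omega, pow_one]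
        module
  -- Phase 2
  have phase2 : ∀ m, p + 1 ≤ m → m ≤ n → compSeq σ 1 m (e 1 (p + 2)) =
      (∑ r ∈ Icc 1 p, ((∑ s ∈ Icc (r + 1) m, ((x - 1) ^ 2 * x ^ (s - r) * y) • e r s)
          - ((x - 1) * x ^ (m + 1 - r) * y) • e r (m + 1)))
        - (x ^ (m + 1 - p) * y) • e (p + 1) (m + 1)
        + ∑ s ∈ Icc (p + 2) m, (x ^ (s - p) * y * (x - 1)) • e (p + 1) s := by
    intro m
    induction m with
    | zero => omega
    | succ m ih =>
        intro hm hmn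
        have hcomp : compSeq σ 1 (m + 1) = σ (1 + m) * compSeq σ 1 m := rfl
        rw [hcomp, Module.End.mul_apply, show 1 + m = m + 1 from by omega]
        rcases Nat.lt_or_ge m (p + 1) with hmp | hmp
        · -- base: m = p, use phase1
          have hmp' : m = p := by omega
          subst hmp'
          rw [phase1 m le_rfl, map_add, map_sum,
            Finset.sum_congr rfl (fun r hr => hdebris m r (by simp only [Finset.mem_Icc] at hr; omega)
              (by simp only [Finset.mem_Icc] at hr; omega) (by omega)),
            hkill (m + 1) (by omega) (by omega),
            Finset.Icc_eq_empty (show ¬ (m + 2 ≤ m + 1) by omega), Finset.sum_empty,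
            show m + 1 + 1 = m + 2 from by omega,
            show m + 1 + 1 - m = 2 from by omega]
          module
        · -- inductive step within phase 2
          have hss2 : (∑ s ∈ Icc (p + 2) m, σ (m + 1) ((x ^ (s - p) * y * (x - 1)) • e (p + 1) s))
              = ∑ s ∈ Icc (p + 2) m, (x ^ (s - p) * y * (x - 1)) • e (p + 1) s :=
            Finset.sum_congr rfl fun s hs => by
              simp only [Finset.mem_Icc] at hs
              rw [map_smul, hfix (m + 1) (p + 1) s (by omega) (by omega) (by omega) (by omega)]
          rw [ih (by omega) (by omega), map_add, map_sub, map_sum,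
            Finset.sum_congr rfl (fun r hr => hdebris m r (by simp only [Finset.mem_Icc] at hr; omega)
              (by simp only [Finset.mem_Icc] at hr; omega) (by omega)),
            map_sum, hss2, map_smul, hspread (m + 1) (p + 1) (by omega) (by omega) (by omega),
            Finset.sum_Icc_succ_top (show p + 2 ≤ m + 1 by omega),
            show m + 1 + 1 = m + 2 from by omega,
            show m + 1 + 1 - p = m - p + 1 + 1 from by omega,
            show m + 1 - p = m - p + 1 from by omega]
          module
  rw [show p + 2 - 2 = p from by omega, show p + 2 - 1 = p + 1 from by omega,
    show n + 3 - (p + 2) = n + 1 - p from by omega,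
    phase2 n (by omega) le_rfl, Finset.sum_sub_distrib]
  congr 1
  refine Finset.sum_congr rfl fun s hs => ?_
  rw [show s + 2 - (p + 2) = s - p from by omega]
end

section
/- For every integer j with 2 ≤ j ≤ n+1, one has (σ_n ∘ σ_{n−1} ∘ ⋯ ∘ σ_j)(e_{j−1,j}) = x^{n−j+1} · e_{j−1,n+1} + Σ_{s=j}^{n} (1−x) x^{s−j} · e_{j−1,s}, where for j = n+1 the composite on the left is the identity map and the sum on the right is empty. -/
open Finset

/-- For the LKB generators `σ_k` (Paoluzzi–Paris conventions) acting on the free module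
with basis `e i j`, `1 ≤ i < j ≤ n+1`, one has, for `2 ≤ j ≤ n+1`,
`(σ_n ∘ ⋯ ∘ σ_j) (e (j-1) j) = x^{n-j+1} • e (j-1) (n+1) + Σ_{s=j}^{n} (1-x) x^{s-j} • e (j-1) s`,
the composite being the identity and the sum empty when `j = n+1`. -/
theorem sigma_tail_on_e {R : Type*} [CommRing R] (x y : R)
    {V : Type*} [AddCommGroup V] [Module R V]
    (n : ℕ) (hn : 1 ≤ n)
    (e : ℕ → ℕ → V) (σ : ℕ → Module.End R V)
    (hσ : ∀ k i j, 1 ≤ k → k ≤ n → 1 ≤ i → i < j → j ≤ n + 1 →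
      σ k (e i j) =
        if i = k + 1 then x • e k j + (1 - x) • e i j
        else if k = i ∧ i + 1 < j then e (i + 1) j - (x * y * (x - 1)) • e k (k + 1)
        else if k = i ∧ j = i + 1 then -((x ^ 2 * y) • e k (k + 1))
        else if i < k ∧ k + 1 < j then e i j - (y * (x - 1) ^ 2) • e k (k + 1)
        else if i < k ∧ k + 1 = j then e i (j - 1) - (x * y * (x - 1)) • e k (k + 1)
        else if k = j then x • e i (j + 1) + (1 - x) • e i j
        else e i j)
    (j : ℕ) (hj2 : 2 ≤ j) (hj : j ≤ n + 1) :
    compSeq σ j (n + 1 - j) (e (j - 1) j) =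
      x ^ (n + 1 - j) • e (j - 1) (n + 1)
        + ∑ s ∈ Finset.Icc j n, ((1 - x) * x ^ (s - j)) • e (j - 1) s := by
  have key : ∀ L, j + L ≤ n + 1 →
      compSeq σ j L (e (j - 1) j) =
        x ^ L • e (j - 1) (j + L)
          + ∑ t ∈ Finset.range L, ((1 - x) * x ^ t) • e (j - 1) (j + t) := by
    intro L
    induction L with
    | zero => intro _; simp [compSeq]
    | succ L ih =>
      intro hL
      have hL' : j + L ≤ n + 1 := by omega
      have hk1 : 1 ≤ j + L := by omega
      have hkn : j + L ≤ n := by omega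
      have hi1 : 1 ≤ j - 1 := by omega
      rw [show compSeq σ j (L + 1) = σ (j + L) * compSeq σ j L from rfl]
      rw [Module.End.mul_apply, ih hL', map_add, map_smul, map_sum]
      have h1 : σ (j + L) (e (j - 1) (j + L)) =
          x • e (j - 1) (j + L + 1) + (1 - x) • e (j - 1) (j + L) := by
        rw [hσ (j + L) (j - 1) (j + L) hk1 hkn hi1 (by omega) (by omega)]
        rw [if_neg (by omega), if_neg (by omega), if_neg (by omega),
          if_neg (by omega), if_neg (by omega), if_pos rfl]
      have h2 : ∀ t ∈ Finset.range L,
          σ (j + L) (((1 - x) * x ^ t) • e (j - 1) (j + t)) =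
            ((1 - x) * x ^ t) • e (j - 1) (j + t) := by
        intro t ht
        rw [Finset.mem_range] at ht
        rw [map_smul, hσ (j + L) (j - 1) (j + t) hk1 hkn hi1 (by omega) (by omega)]
        rw [if_neg (by omega), if_neg (by omega), if_neg (by omega),
          if_neg (by omega), if_neg (by omega), if_neg (by omega)]
      rw [h1, Finset.sum_congr rfl h2, Finset.sum_range_succ, smul_add,
        smul_smul, smul_smul]
      have : j + L + 1 = j + (L + 1) := by omega
      rw [this]
      ring_nf
      rw [show x * x ^ L = x ^ (L + 1) by ring]
      abel
  have hjL : j + (n + 1 - j) = n + 1 := by omega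
  rw [key (n + 1 - j) (by omega), hjL]
  congr 1
  rw [show Finset.Icc j n = Finset.Ico j (n + 1) from rfl, Finset.sum_Ico_eq_sum_range]
  apply Finset.sum_congr (by congr 1)
  intro t ht
  rw [Nat.add_sub_cancel_left]
end

section
/- The R-linear endomorphisms M and N of V are mutually inverse: M ∘ N = id_V and N ∘ M = id_V. -/
/-!
Both maps act on `e i j` through the second index only, as unitriangular matrices with
entries depending on `(j, s)`. Writing `y = x⁻¹`, the entries of `N` are
`x ^ (s - j) (x - 1) = y ^ (j - 1 - s) (1 - y)`, so the vanishing of the off-diagonal entries of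
`M ∘ N` is the geometric sum identity `(1 - y) ∑_{k < m} y ^ k = 1 - y ^ m`. As `V` is finite
free, `M * N = 1` forces `N * M = 1`.
-/

open Finset

theorem Nat.Icc_add_one_sub_one_eq_Ioo (a b : ℕ) : Icc (a + 1) (b - 1) = Ioo a b := by
  ext s
  simp only [mem_Icc, mem_Ioo]
  omega

section Unitriangular

variable {R V : Type*} [CommRing R] [AddCommGroup V] [Module R V]

def IsUnitriangularOn (n : ℕ) (e : ℕ → ℕ → V) (f : ℕ → ℕ → R) (F : Module.End R V) :
    Prop :=
  ∀ i j, 1 ≤ i → i < j → j ≤ n + 1 → F (e i j) = e i j + ∑ s ∈ Ioo i j, f j s • e i s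

variable {e : ℕ → ℕ → V} {n : ℕ} {F G : Module.End R V} {f g : ℕ → ℕ → R}

theorem unitriangular_comp_apply
    (hF : IsUnitriangularOn n e f F) (hG : IsUnitriangularOn n e g G)
    {i j : ℕ} (hi : 1 ≤ i) (hij : i < j) (hj : j ≤ n + 1) :
    F (G (e i j)) =
      e i j + ∑ t ∈ Ioo i j, (f j t + g j t + ∑ s ∈ Ioo t j, g j s * f s t) • e i t := by
  have hFs : ∀ s ∈ Ioo i j,
      g j s • F (e i s) = g j s • e i s + ∑ t ∈ Ioo i s, (g j s * f s t) • e i t := by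
    intro s hs
    rw [mem_Ioo] at hs
    rw [hF i s hi hs.1 (by omega), smul_add, smul_sum]
    simp only [smul_smul]
  have hswap : ∑ s ∈ Ioo i j, ∑ t ∈ Ioo i s, (g j s * f s t) • e i t
      = ∑ t ∈ Ioo i j, (∑ s ∈ Ioo t j, g j s * f s t) • e i t := by
    simp only [sum_smul]
    exact sum_comm' fun s t => by simp only [mem_Ioo]; omega
  rw [hG i j hi hij hj, map_add, map_sum, hF i j hi hij hj]
  simp only [map_smul]
  rw [sum_congr rfl hFs, sum_add_distrib, hswap]
  simp only [add_smul, sum_add_distrib]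
  abel

theorem unitriangular_comp_apply_eq_self
    (hF : IsUnitriangularOn n e f F) (hG : IsUnitriangularOn n e g G)
    (hfg : ∀ t j, t < j → f j t + g j t + ∑ s ∈ Ioo t j, g j s * f s t = 0)
    {i j : ℕ} (hi : 1 ≤ i) (hij : i < j) (hj : j ≤ n + 1) :
    F (G (e i j)) = e i j := by
  rw [unitriangular_comp_apply hF hG hi hij hj, add_eq_left]
  exact sum_eq_zero fun t ht => by rw [hfg t j (mem_Ioo.1 ht).2, zero_smul]

end Unitriangular

theorem finite_subtype_le_lt_le (n : ℕ) :
    Finite {p : ℕ × ℕ // 1 ≤ p.1 ∧ p.1 < p.2 ∧ p.2 ≤ n + 1} :=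
  Set.Finite.to_subtype <| ((Set.finite_Iic (n + 1)).prod (Set.finite_Iic (n + 1))).subset
    fun _ hp => ⟨Set.mem_Iic.2 (hp.2.1.trans_le hp.2.2).le, Set.mem_Iic.2 hp.2.2⟩

theorem one_sub_mul_sum_Ioo_pow {R : Type*} [CommRing R] (y : R) (t j : ℕ) :
    (1 - y) * ∑ s ∈ Ioo t j, y ^ (j - 1 - s) = 1 - y ^ (j - 1 - t) := by
  rw [← mul_neg_geom_sum]
  congr 1
  exact sum_nbij' (j - 1 - ·) (j - 1 - ·)
    (fun s hs => by simp only [mem_Ioo, mem_range] at *; omega)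
    (fun k hk => by simp only [mem_Ioo, mem_range] at *; omega)
    (fun s hs => by simp only [mem_Ioo] at hs; omega)
    (fun k hk => by simp only [mem_range] at hk; omega) fun _ _ => rfl

namespace Units

variable {R : Type*} [CommRing R] (x : Rˣ)

theorem zpow_sub_mul_sub_one {s j : ℕ} (hsj : s < j) :
    ((x ^ ((s : ℤ) - j) : Rˣ) : R) * (x - 1)
      = ((x⁻¹ : Rˣ) : R) ^ (j - 1 - s) * (1 - (x⁻¹ : Rˣ)) := by
  obtain ⟨k, rfl⟩ : ∃ k, j = s + 1 + k := ⟨j - s - 1, by omega⟩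
  have hexp : (s : ℤ) - (s + 1 + k : ℕ) = -((k + 1 : ℕ) : ℤ) := by push_cast; ring
  rw [hexp, zpow_neg, zpow_natCast, ← inv_pow, show s + 1 + k - 1 - s = k by omega, pow_succ,
    val_mul, val_pow_eq_pow_val, mul_assoc, mul_sub, inv_mul, mul_one]

theorem zpow_sub_mul_sub_one_add_sum_Ioo {t j : ℕ} (htj : t < j) :
    ((x ^ ((t : ℤ) - j) : Rˣ) : R) * (x - 1)
      + ∑ s ∈ Ioo t j, ((x ^ ((s : ℤ) - j) : Rˣ) : R) * (x - 1) * (1 - (x⁻¹ : Rˣ))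
      = 1 - (x⁻¹ : Rˣ) := by
  set y : R := ((x⁻¹ : Rˣ) : R)
  have hsum : ∑ s ∈ Ioo t j, ((x ^ ((s : ℤ) - j) : Rˣ) : R) * (x - 1) * (1 - y)
      = (1 - y) * ((1 - y) * ∑ s ∈ Ioo t j, y ^ (j - 1 - s)) := by
    rw [mul_sum, mul_sum]
    refine sum_congr rfl fun s hs => ?_
    rw [zpow_sub_mul_sub_one x (mem_Ioo.1 hs).2]
    ring
  rw [hsum, one_sub_mul_sum_Ioo_pow, zpow_sub_mul_sub_one x htj]
  ring

end Units

theorem M_N_mutually_inverse_general {R : Type*} [CommRing R] (x : Rˣ)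
    {V : Type*} [AddCommGroup V] [Module R V]
    (n : ℕ)
    (e : ℕ → ℕ → V)
    (b : Module.Basis {p : ℕ × ℕ // 1 ≤ p.1 ∧ p.1 < p.2 ∧ p.2 ≤ n + 1} R V)
    (hb : ∀ p : {p : ℕ × ℕ // 1 ≤ p.1 ∧ p.1 < p.2 ∧ p.2 ≤ n + 1}, b p = e p.1.1 p.1.2)
    (M N : Module.End R V)
    (hM : ∀ i j, 1 ≤ i → i < j → j ≤ n + 1 →
      M (e i j) = e i j + ∑ s ∈ Finset.Icc (i + 1) (j - 1),
        (1 - ((x⁻¹ : Rˣ) : R)) • e i s)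
    (hN : ∀ i j, 1 ≤ i → i < j → j ≤ n + 1 →
      N (e i j) = e i j - ∑ s ∈ Finset.Icc (i + 1) (j - 1),
        (((x ^ ((s : ℤ) - (j : ℤ)) : Rˣ) : R) * ((x : R) - 1)) • e i s) :
    M * N = 1 ∧ N * M = 1 := by
  simp only [Nat.Icc_add_one_sub_one_eq_Ioo] at hM hN
  have hN' :
      IsUnitriangularOn n e (fun j s => -(((x ^ ((s : ℤ) - j) : Rˣ) : R) * (x - 1))) N := by
    intro i j hi hij hj
    rw [hN i j hi hij hj, sub_eq_add_neg, ← sum_neg_distrib]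
    simp only [neg_smul]
  have hMN : M * N = 1 := b.ext fun p => by
    obtain ⟨⟨i, j⟩, hi, hij, hj⟩ := p
    rw [hb, Module.End.mul_apply, Module.End.one_apply]
    refine unitriangular_comp_apply_eq_self (f := fun _ _ => 1 - ((x⁻¹ : Rˣ) : R)) hM hN'
      (fun t j htj => ?_) hi hij hj
    simp only [neg_mul, sum_neg_distrib]
    linear_combination -x.zpow_sub_mul_sub_one_add_sum_Ioo htj
  have := Module.Free.of_basis b
  have := finite_subtype_le_lt_le n
  have := Module.Finite.of_basis b
  exact ⟨hMN, mul_eq_one_comm.mp hMN⟩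

/-- Let `V` be the free `R`-module with basis `e i j`, `1 ≤ i < j ≤ n+1`, and `x` a unit
of `R`. The endomorphisms `M (e i j) = e i j + Σ_{s=i+1}^{j-1} (1 - x⁻¹) • e i s` and
`N (e i j) = e i j - Σ_{s=i+1}^{j-1} x^{s-j} (x-1) • e i s` are mutually inverse. -/
theorem M_N_mutually_inverse {R : Type*} [CommRing R] (x : Rˣ)
    {V : Type*} [AddCommGroup V] [Module R V]
    (n : ℕ) (hn : 1 ≤ n)
    (e : ℕ → ℕ → V)
    (b : Module.Basis {p : ℕ × ℕ // 1 ≤ p.1 ∧ p.1 < p.2 ∧ p.2 ≤ n + 1} R V)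
    (hb : ∀ p : {p : ℕ × ℕ // 1 ≤ p.1 ∧ p.1 < p.2 ∧ p.2 ≤ n + 1}, b p = e p.1.1 p.1.2)
    (M N : Module.End R V)
    (hM : ∀ i j, 1 ≤ i → i < j → j ≤ n + 1 →
      M (e i j) = e i j + ∑ s ∈ Finset.Icc (i + 1) (j - 1),
        (1 - ((x⁻¹ : Rˣ) : R)) • e i s)
    (hN : ∀ i j, 1 ≤ i → i < j → j ≤ n + 1 →
      N (e i j) = e i j - ∑ s ∈ Finset.Icc (i + 1) (j - 1),
        (((x ^ ((s : ℤ) - (j : ℤ)) : Rˣ) : R) * ((x : R) - 1)) • e i s) :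
    M * N = 1 ∧ N * M = 1 :=
  M_N_mutually_inverse_general x n e b hb M N hM hN
end

section
/- For every integer j with 2 ≤ j ≤ n+1, one has (M ∘ Γ ∘ N)(e_{1,j}) = −x^{n−j+3} y · e_{j−1,n+1}. -/
open Finset

/-- telescoping sum over `Icc` -/
lemma tel_Icc {G : Type*} [AddCommGroup G] (f : ℕ → G) :
    ∀ (b a : ℕ), a ≤ b + 1 → ∑ s ∈ Icc a b, (f (s + 1) - f s) = f (b + 1) - f a := by
  intro b
  induction b with
  | zero =>
    intro a ha
    interval_cases a
    · simp
    · rw [Finset.Icc_eq_empty (by omega)]; simp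
  | succ b ih =>
    intro a ha
    rcases Nat.lt_or_ge a (b + 2) with h | h
    · rw [Finset.sum_Icc_succ_top (by omega) (fun s => f (s + 1) - f s), ih a (by omega)]
      abel
    · rw [Finset.Icc_eq_empty (by omega)]
      have : a = b + 2 := by omega
      subst this; simp

lemma Icc_insert_bot {a b : ℕ} (h : a ≤ b) : Icc a b = insert a (Icc (a + 1) b) := by
  ext t; simp only [mem_Icc, mem_insert]; omega

/-- For the LKB generators `σ_k` (Paoluzzi–Paris conventions), `Γ = σ_n ∘ ⋯ ∘ σ_1`, and
the base-change endomorphisms `M`, `N`, one has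
`(M ∘ Γ ∘ N) (e 1 j) = -x^{n-j+3} y • e (j-1) (n+1)` for all `2 ≤ j ≤ n+1`. -/
theorem MGammaN_on_e_one {R : Type*} [CommRing R] (x : Rˣ) (y : R)
    {V : Type*} [AddCommGroup V] [Module R V]
    (n : ℕ) (hn : 1 ≤ n)
    (e : ℕ → ℕ → V) (σ : ℕ → Module.End R V)
    (hσ : ∀ k i j, 1 ≤ k → k ≤ n → 1 ≤ i → i < j → j ≤ n + 1 →
      σ k (e i j) =
        if i = k + 1 then (x : R) • e k j + (1 - (x : R)) • e i j
        else if k = i ∧ i + 1 < j then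
          e (i + 1) j - ((x : R) * y * ((x : R) - 1)) • e k (k + 1)
        else if k = i ∧ j = i + 1 then -(((x : R) ^ 2 * y) • e k (k + 1))
        else if i < k ∧ k + 1 < j then e i j - (y * ((x : R) - 1) ^ 2) • e k (k + 1)
        else if i < k ∧ k + 1 = j then
          e i (j - 1) - ((x : R) * y * ((x : R) - 1)) • e k (k + 1)
        else if k = j then (x : R) • e i (j + 1) + (1 - (x : R)) • e i j
        else e i j)
    (M N : Module.End R V)
    (hM : ∀ i j, 1 ≤ i → i < j → j ≤ n + 1 →
      M (e i j) = e i j + ∑ s ∈ Finset.Icc (i + 1) (j - 1),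
        (1 - ((x⁻¹ : Rˣ) : R)) • e i s)
    (hN : ∀ i j, 1 ≤ i → i < j → j ≤ n + 1 →
      N (e i j) = e i j - ∑ s ∈ Finset.Icc (i + 1) (j - 1),
        (((x ^ ((s : ℤ) - (j : ℤ)) : Rˣ) : R) * ((x : R) - 1)) • e i s)
    (j : ℕ) (hj2 : 2 ≤ j) (hj : j ≤ n + 1) :
    M (compSeq σ 1 n (N (e 1 j))) =
      (-(((x ^ (n + 3 - j) : Rˣ) : R) * y)) • e (j - 1) (n + 1) := by
  set c : ℤ → R := fun m => ((x ^ m : Rˣ) : R) with hcdef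
  have hc : ∀ m : ℤ, c (m + 1) = c m * (x : R) := by
    intro m; simp only [hcdef]
    rw [zpow_add_one, Units.val_mul]
  have hcc : ∀ m k : ℤ, c m * c k = c (m + k) := by
    intro m k; simp only [hcdef]
    rw [← Units.val_mul, ← zpow_add]
  have hc0 : c 0 = 1 := by simp [hcdef]
  have hc2 : c 2 = (x : R) ^ 2 := by
    simp only [hcdef]
    rw [show (2 : ℤ) = ((2 : ℕ) : ℤ) from rfl, zpow_natCast, Units.val_pow_eq_pow_val]
  have hcm1 : ((x⁻¹ : Rˣ) : R) = c (-1) := by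
    simp only [hcdef]; rw [zpow_neg_one]
  -- telescoping for c-sums
  have telc : ∀ (a b : ℕ) (m : ℤ), a ≤ b + 1 →
      ∑ s ∈ Icc a b, (c ((s : ℤ) - m) * ((x : R) - 1))
        = c ((b : ℤ) + 1 - m) - c ((a : ℤ) - m) := by
    intro a b m hab
    have h := tel_Icc (fun s : ℕ => c ((s : ℤ) - m)) b a hab
    calc ∑ s ∈ Icc a b, (c ((s : ℤ) - m) * ((x : R) - 1))
        = ∑ s ∈ Icc a b, ((fun s : ℕ => c ((s : ℤ) - m)) (s + 1)
            - (fun s : ℕ => c ((s : ℤ) - m)) s) := by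
          refine Finset.sum_congr rfl fun s _ => ?_
          simp only
          rw [show ((s + 1 : ℕ) : ℤ) - m = ((s : ℤ) - m) + 1 by push_cast; ring, hc]
          ring
      _ = c ((b : ℤ) + 1 - m) - c ((a : ℤ) - m) := by
          rw [h]
          rw [show ((b + 1 : ℕ) : ℤ) - m = (b : ℤ) + 1 - m by push_cast; ring]
  -- σ case lemmas
  have hA : ∀ k jj, 1 ≤ k → k ≤ n → k + 1 < jj → jj ≤ n + 1 →
      σ k (e k jj) = e (k + 1) jj - ((x : R) * y * ((x : R) - 1)) • e k (k + 1) := by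
    intro k jj h1 h2 h3 h4
    rw [hσ k k jj h1 h2 h1 (by omega) h4, if_neg (by omega), if_pos ⟨rfl, by omega⟩]
  have hB : ∀ k, 1 ≤ k → k ≤ n →
      σ k (e k (k + 1)) = -(((x : R) ^ 2 * y) • e k (k + 1)) := by
    intro k h1 h2
    rw [hσ k k (k + 1) h1 h2 h1 (by omega) (by omega), if_neg (by omega),
      if_neg (by omega), if_pos ⟨rfl, rfl⟩]
  have hC : ∀ i k, 1 ≤ i → i < k → k ≤ n →
      σ k (e i k) = (x : R) • e i (k + 1) + (1 - (x : R)) • e i k := by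
    intro i k h1 h2 h3
    rw [hσ k i k (by omega) h3 h1 h2 (by omega), if_neg (by omega), if_neg (by omega),
      if_neg (by omega), if_neg (by omega), if_neg (by omega), if_pos rfl]
  have hD : ∀ i k jj, 1 ≤ i → i < jj → jj < k → k ≤ n → σ k (e i jj) = e i jj := by
    intro i k jj h1 h2 h3 h4
    rw [hσ k i jj (by omega) h4 h1 h2 (by omega), if_neg (by omega), if_neg (by omega),
      if_neg (by omega), if_neg (by omega), if_neg (by omega), if_neg (by omega)]
  -- phase 1
  have phase1 : ∀ L, L ≤ j - 2 →
      compSeq σ 1 L (N (e 1 j)) =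
        e (L + 1) j - ∑ s ∈ Icc (L + 2) (j - 1),
          (c ((s : ℤ) - (j : ℤ)) * ((x : R) - 1)) • e (L + 1) s := by
    intro L
    induction L with
    | zero =>
      intro _
      rw [show compSeq σ 1 0 = (1 : Module.End R V) from rfl, Module.End.one_apply,
        hN 1 j le_rfl (by omega) hj]
    | succ L ih =>
      intro hL
      have hL' : L ≤ j - 2 := by omega
      rw [show compSeq σ 1 (L + 1) = σ (1 + L) * compSeq σ 1 L from rfl,
        Module.End.mul_apply, ih hL', show 1 + L = L + 1 by omega,
        map_sub, map_sum, hA (L + 1) j (by omega) (by omega) (by omega) (by omega)]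
      rw [Icc_insert_bot (show L + 2 ≤ j - 1 by omega),
        Finset.sum_insert (by simp only [mem_Icc]; omega)]
      have hb := hB (L + 1) (by omega) (by omega)
      rw [show L + 1 + 1 = L + 2 from rfl] at hb
      rw [map_smul, hb]
      have hrest : ∑ s ∈ Icc (L + 3) (j - 1),
          σ (L + 1) ((c ((s : ℤ) - (j : ℤ)) * ((x : R) - 1)) • e (L + 1) s)
          = ∑ s ∈ Icc (L + 3) (j - 1),
            ((c ((s : ℤ) - (j : ℤ)) * ((x : R) - 1)) • e (L + 2) s
              - ((c ((s : ℤ) - (j : ℤ)) * ((x : R) - 1)) * ((x : R) * y * ((x : R) - 1)))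
                • e (L + 1) (L + 2)) := by
        refine Finset.sum_congr rfl fun s hs => ?_
        simp only [mem_Icc] at hs
        have ha := hA (L + 1) s (by omega) (by omega) (by omega) (by omega)
        rw [show L + 1 + 1 = L + 2 from rfl] at ha
        rw [map_smul, ha, smul_sub, smul_smul]
      rw [hrest, Finset.sum_sub_distrib, ← Finset.sum_smul, ← Finset.sum_mul,
        telc (L + 3) (j - 1) (j : ℤ) (by omega)]
      rw [show ((j - 1 : ℕ) : ℤ) + 1 - (j : ℤ) = 0 by omega,
        show ((L + 3 : ℕ) : ℤ) - (j : ℤ) = (((L + 2 : ℕ) : ℤ) - (j : ℤ)) + 1 by push_cast; ring,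
        hc0, hc]
      simp only [show L + 1 + 1 = L + 2 from rfl, show L + 1 + 2 = L + 3 from rfl]
      module
  -- phase 2
  have phase2 : ∀ L (hL1 : j - 1 ≤ L), L ≤ n →
      compSeq σ 1 L (N (e 1 j)) =
        (-(c ((L : ℤ) + 3 - (j : ℤ)) * y)) •
          (e (j - 1) (L + 1) - ∑ t ∈ Icc j L,
            (c ((t : ℤ) - ((L : ℤ) + 1)) * ((x : R) - 1)) • e (j - 1) t) := by
    intro L hL1
    induction L, hL1 using Nat.le_induction with
    | base =>
      intro _
      conv_lhs => rw [show j - 1 = (j - 2) + 1 by omega]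
      rw [show compSeq σ 1 ((j - 2) + 1) = σ (1 + (j - 2)) * compSeq σ 1 (j - 2) from rfl,
        Module.End.mul_apply, phase1 (j - 2) le_rfl,
        show (j - 2) + 1 = j - 1 by omega, show (j - 2) + 2 = j by omega,
        show 1 + (j - 2) = j - 1 by omega]
      rw [Finset.Icc_eq_empty (show ¬ j ≤ j - 1 by omega)]
      simp only [Finset.sum_empty, sub_zero]
      have hb := hB (j - 1) (by omega) (by omega)
      rw [show (j - 1) + 1 = j by omega] at hb ⊢
      rw [hb, show ((j - 1 : ℕ) : ℤ) + 3 - (j : ℤ) = 2 by omega, hc2, neg_smul]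
    | succ L hL ih =>
      intro hLn
      rw [show compSeq σ 1 (L + 1) = σ (1 + L) * compSeq σ 1 L from rfl,
        Module.End.mul_apply, ih (by omega), show 1 + L = L + 1 by omega,
        map_smul, map_sub, map_sum]
      have hcs := hC (j - 1) (L + 1) (by omega) (by omega) (by omega)
      rw [show L + 1 + 1 = L + 2 from rfl] at hcs
      rw [hcs]
      have hfix : ∑ t ∈ Icc j L,
          σ (L + 1) ((c ((t : ℤ) - ((L : ℤ) + 1)) * ((x : R) - 1)) • e (j - 1) t)
          = ∑ t ∈ Icc j L,
            (c ((t : ℤ) - ((L : ℤ) + 1)) * ((x : R) - 1)) • e (j - 1) t := by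
        refine Finset.sum_congr rfl fun t ht => ?_
        simp only [mem_Icc] at ht
        rw [map_smul, hD (j - 1) (L + 1) t (by omega) (by omega) (by omega) (by omega)]
      rw [hfix]
      rw [Finset.sum_Icc_succ_top (show j ≤ L + 1 by omega)]
      -- key scalar lemma
      have key : ∀ (A B A' B' : ℤ), A + B = A' + B' →
          (-(c A * y)) * (c B * ((x : R) - 1)) = (-(c A' * y)) * (c B' * ((x : R) - 1)) := by
        intro A B A' B' h
        rw [show (-(c A * y)) * (c B * ((x : R) - 1))
            = -((c A * c B) * (y * ((x : R) - 1))) by ring,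
          show (-(c A' * y)) * (c B' * ((x : R) - 1))
            = -((c A' * c B') * (y * ((x : R) - 1))) by ring,
          hcc, hcc, h]
      rw [smul_sub, smul_add, Finset.smul_sum]
      rw [smul_sub, smul_add, Finset.smul_sum]
      have t1 : (-(c ((L : ℤ) + 3 - (j : ℤ)) * y)) • ((x : R) • e (j - 1) (L + 2))
          = (-(c (((L + 1 : ℕ) : ℤ) + 3 - (j : ℤ)) * y)) • e (j - 1) (L + 2) := by
        rw [smul_smul, show (-(c ((L : ℤ) + 3 - (j : ℤ)) * y)) * (x : R)
            = -((c ((L : ℤ) + 3 - (j : ℤ)) * (x : R)) * y) by ring, ← hc,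
          show ((L : ℤ) + 3 - (j : ℤ)) + 1 = ((L + 1 : ℕ) : ℤ) + 3 - (j : ℤ) by push_cast; ring]
      have t2 : (-(c ((L : ℤ) + 3 - (j : ℤ)) * y)) • ((1 - (x : R)) • e (j - 1) (L + 1))
          = -((-(c (((L + 1 : ℕ) : ℤ) + 3 - (j : ℤ)) * y)) •
              ((c (((L + 1 : ℕ) : ℤ) - (((L + 1 : ℕ) : ℤ) + 1)) * ((x : R) - 1))
                • e (j - 1) (L + 1))) := by
        rw [smul_smul, smul_smul, ← neg_smul]
        congr 1
        have hx1 : c (-1) * (x : R) = 1 := by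
          have h := hc (-1)
          norm_num at h
          rw [hc0] at h
          exact h.symm
        rw [show ((L + 1 : ℕ) : ℤ) - (((L + 1 : ℕ) : ℤ) + 1) = -1 by ring,
          show ((L + 1 : ℕ) : ℤ) + 3 - (j : ℤ) = ((L : ℤ) + 3 - (j : ℤ)) + 1 by push_cast; ring,
          hc]
        linear_combination (-(c ((L : ℤ) + 3 - (j : ℤ)) * y * ((x : R) - 1))) * hx1
      have tsum : ∑ t ∈ Icc j L, (-(c ((L : ℤ) + 3 - (j : ℤ)) * y)) •
            ((c ((t : ℤ) - ((L : ℤ) + 1)) * ((x : R) - 1)) • e (j - 1) t)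
          = ∑ t ∈ Icc j L, (-(c (((L + 1 : ℕ) : ℤ) + 3 - (j : ℤ)) * y)) •
            ((c ((t : ℤ) - (((L + 1 : ℕ) : ℤ) + 1)) * ((x : R) - 1)) • e (j - 1) t) := by
        refine Finset.sum_congr rfl fun t ht => ?_
        rw [smul_smul, smul_smul, key ((L : ℤ) + 3 - (j : ℤ)) ((t : ℤ) - ((L : ℤ) + 1)) (((L + 1 : ℕ) : ℤ) + 3 - (j : ℤ)) ((t : ℤ) - (((L + 1 : ℕ) : ℤ) + 1)) (by push_cast; ring)]
      rw [t1, t2, tsum]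
      abel
  -- final step
  rw [phase2 n (by omega) le_rfl, map_smul, map_sub, map_sum]
  have hMe := hM (j - 1) (n + 1) (by omega) (by omega) (by omega)
  rw [show (j - 1) + 1 = j by omega, show (n + 1) - 1 = n by omega, hcm1] at hMe
  rw [hMe]
  have hMt : ∀ t ∈ Icc j n, M ((c ((t : ℤ) - ((n : ℤ) + 1)) * ((x : R) - 1)) • e (j - 1) t)
      = (c ((t : ℤ) - ((n : ℤ) + 1)) * ((x : R) - 1)) • e (j - 1) t
        + ∑ s ∈ Icc j (t - 1),
            ((c ((t : ℤ) - ((n : ℤ) + 1)) * ((x : R) - 1)) * (1 - c (-1))) • e (j - 1) s := by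
    intro t ht
    simp only [mem_Icc] at ht
    have h := hM (j - 1) t (by omega) (by omega) (by omega)
    rw [show (j - 1) + 1 = j by omega, hcm1] at h
    rw [map_smul, h, smul_add, Finset.smul_sum]
    congr 1
    refine Finset.sum_congr rfl fun s _ => ?_
    rw [smul_smul]
  rw [Finset.sum_congr rfl hMt, Finset.sum_add_distrib]
  have swap : ∑ t ∈ Icc j n, ∑ s ∈ Icc j (t - 1),
        ((c ((t : ℤ) - ((n : ℤ) + 1)) * ((x : R) - 1)) * (1 - c (-1))) • e (j - 1) s
      = ∑ s ∈ Icc j n, ∑ t ∈ Icc (s + 1) n,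
        ((c ((t : ℤ) - ((n : ℤ) + 1)) * ((x : R) - 1)) * (1 - c (-1))) • e (j - 1) s := by
    refine Finset.sum_comm' ?_
    intro t s
    simp only [mem_Icc]
    omega
  rw [swap]
  have inner : ∀ s ∈ Icc j n, ∑ t ∈ Icc (s + 1) n,
        ((c ((t : ℤ) - ((n : ℤ) + 1)) * ((x : R) - 1)) * (1 - c (-1))) • e (j - 1) s
      = ((1 - c ((s : ℤ) - (n : ℤ))) * (1 - c (-1))) • e (j - 1) s := by
    intro s hs
    simp only [mem_Icc] at hs
    rw [← Finset.sum_smul, ← Finset.sum_mul, telc (s + 1) n ((n : ℤ) + 1) (by omega),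
      show (n : ℤ) + 1 - ((n : ℤ) + 1) = 0 by ring,
      show ((s + 1 : ℕ) : ℤ) - ((n : ℤ) + 1) = (s : ℤ) - (n : ℤ) by push_cast; ring, hc0]
  rw [Finset.sum_congr rfl inner]
  rw [show ((x ^ (n + 3 - j) : Rˣ) : R) = c ((n : ℤ) + 3 - (j : ℤ)) by
    simp only [hcdef]
    rw [show (n : ℤ) + 3 - (j : ℤ) = ((n + 3 - j : ℕ) : ℤ) by omega, zpow_natCast]]
  have merge : ∑ s ∈ Icc j n, (1 - c (-1)) • e (j - 1) s
      = ∑ t ∈ Icc j n, (c ((t : ℤ) - ((n : ℤ) + 1)) * ((x : R) - 1)) • e (j - 1) t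
        + ∑ s ∈ Icc j n, ((1 - c ((s : ℤ) - (n : ℤ))) * (1 - c (-1))) • e (j - 1) s := by
    rw [← Finset.sum_add_distrib]
    refine Finset.sum_congr rfl fun s _ => ?_
    rw [← add_smul]
    congr 1
    have h1 : c ((s : ℤ) - ((n : ℤ) + 1)) * (x : R) = c ((s : ℤ) - (n : ℤ)) := by
      rw [← hc]
      congr 1
      ring
    have h2 : c ((s : ℤ) - (n : ℤ)) * c (-1) = c ((s : ℤ) - ((n : ℤ) + 1)) := by
      rw [hcc]
      congr 1
      ring
    linear_combination -h1 - h2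
  rw [merge]
  congr 1
  abel
end

section
/- For every integer j with 2 ≤ j ≤ n+1, one has Γ(N(e_{1,j})) = −x^{n−j+3} y · ( e_{j−1,n+1} + Σ_{s=j}^{n} x^{s−n−1}(1−x) · e_{j−1,s} ), where negative powers of x are interpreted via x⁻¹ and the sum is empty when j = n+1. -/
open Finset


lemma zpow_coe_succ {R : Type*} [CommRing R] (x : Rˣ) (a : ℤ) :
    ((x ^ (a + 1) : Rˣ) : R) = ((x ^ a : Rˣ) : R) * (x : R) := by
  rw [zpow_add_one, Units.val_mul]

lemma geomsum {R : Type*} [CommRing R] (x : Rˣ) (c : ℤ) :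
    ∀ (b a : ℕ), a ≤ b + 1 →
      ∑ s ∈ Finset.Icc a b, ((x ^ ((s : ℤ) - c) : Rˣ) : R) * ((x : R) - 1)
        = ((x ^ ((b : ℤ) + 1 - c) : Rˣ) : R) - ((x ^ ((a : ℤ) - c) : Rˣ) : R) := by
  intro b
  induction b with
  | zero =>
    intro a ha
    interval_cases a
    · simp only [Finset.Icc_self, Finset.sum_singleton, Nat.cast_zero]
      rw [show (0:ℤ) + 1 - c = (0 - c) + 1 by ring, zpow_coe_succ]
      ring
    · rw [Finset.Icc_eq_empty (by omega), Finset.sum_empty,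
        show ((1:ℕ):ℤ) - c = ((0:ℕ):ℤ) + 1 - c by push_cast; ring, sub_self]
  | succ b ih =>
    intro a ha
    rcases Nat.lt_or_ge a (b + 2) with h | h
    · rw [Finset.sum_Icc_succ_top (by omega), ih a (by omega),
        show (((b+1:ℕ):ℤ) - c) = ((b:ℤ) + 1 - c) by push_cast; ring,
        show (((b+1:ℕ):ℤ) + 1 - c) = (((b:ℤ) + 1 - c) + 1) by push_cast; ring,
        zpow_coe_succ]
      ring
    · rw [Finset.Icc_eq_empty (by omega), Finset.sum_empty,
        show ((a:ℕ):ℤ) - c = ((b+1:ℕ):ℤ) + 1 - c by omega, sub_self]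

lemma compSeq_succ' {R : Type*} [CommSemiring R] {V : Type*} [AddCommMonoid V] [Module R V]
    (σ : ℕ → Module.End R V) (L : ℕ) (v : V) :
    compSeq σ 1 (L + 1) v = σ (L + 1) (compSeq σ 1 L v) := by
  show (σ (1 + L) * compSeq σ 1 L) v = _
  rw [Nat.add_comm 1 L, Module.End.mul_apply]

/-- For the LKB generators `σ_k` (Paoluzzi–Paris conventions), `Γ = σ_n ∘ ⋯ ∘ σ_1`, and
the base-change endomorphism `N`, one has, for `2 ≤ j ≤ n+1`,
`Γ (N (e 1 j)) = -x^{n-j+3} y • (e (j-1) (n+1) + Σ_{s=j}^{n} x^{s-n-1} (1-x) • e (j-1) s)`. -/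
theorem GammaN_on_e_one {R : Type*} [CommRing R] (x : Rˣ) (y : R)
    {V : Type*} [AddCommGroup V] [Module R V]
    (n : ℕ) (hn : 1 ≤ n)
    (e : ℕ → ℕ → V) (σ : ℕ → Module.End R V)
    (hσ : ∀ k i j, 1 ≤ k → k ≤ n → 1 ≤ i → i < j → j ≤ n + 1 →
      σ k (e i j) =
        if i = k + 1 then (x : R) • e k j + (1 - (x : R)) • e i j
        else if k = i ∧ i + 1 < j then
          e (i + 1) j - ((x : R) * y * ((x : R) - 1)) • e k (k + 1)
        else if k = i ∧ j = i + 1 then -(((x : R) ^ 2 * y) • e k (k + 1))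
        else if i < k ∧ k + 1 < j then e i j - (y * ((x : R) - 1) ^ 2) • e k (k + 1)
        else if i < k ∧ k + 1 = j then
          e i (j - 1) - ((x : R) * y * ((x : R) - 1)) • e k (k + 1)
        else if k = j then (x : R) • e i (j + 1) + (1 - (x : R)) • e i j
        else e i j)
    (N : Module.End R V)
    (hN : ∀ i j, 1 ≤ i → i < j → j ≤ n + 1 →
      N (e i j) = e i j - ∑ s ∈ Finset.Icc (i + 1) (j - 1),
        (((x ^ ((s : ℤ) - (j : ℤ)) : Rˣ) : R) * ((x : R) - 1)) • e i s)
    (j : ℕ) (hj2 : 2 ≤ j) (hj : j ≤ n + 1) :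
    compSeq σ 1 n (N (e 1 j)) =
      (-(((x ^ (n + 3 - j) : Rˣ) : R) * y)) •
        (e (j - 1) (n + 1) + ∑ s ∈ Finset.Icc j n,
          (((x ^ ((s : ℤ) - (n : ℤ) - 1) : Rˣ) : R) * (1 - (x : R))) • e (j - 1) s) := by
  -- Phase A invariant
  have claim1 : ∀ m, m ≤ j - 2 → compSeq σ 1 m (N (e 1 j)) =
      e (m + 1) j - ∑ s ∈ Finset.Icc (m + 2) (j - 1),
        (((x ^ ((s : ℤ) - (j : ℤ)) : Rˣ) : R) * ((x : R) - 1)) • e (m + 1) s := by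
    intro m
    induction m with
    | zero =>
      intro _
      show (1 : Module.End R V) (N (e 1 j)) = _
      rw [Module.End.one_apply, hN 1 j le_rfl (by omega) hj]
    | succ m ih =>
      intro hm
      rw [compSeq_succ', ih (by omega), map_sub, map_sum,
        hσ (m+1) (m+1) j (by omega) (by omega) (by omega) (by omega) hj,
        if_neg (by omega), if_pos ⟨rfl, by omega⟩,
        show Finset.Icc (m+1+1) (j-1) = insert (m+1+1) (Finset.Icc (m+1+2) (j-1)) from by
          ext t; simp only [Finset.mem_Icc, Finset.mem_insert]; omega,
        Finset.sum_insert (by simp only [Finset.mem_Icc]; omega),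
        map_smul,
        hσ (m+1) (m+1) (m+1+1) (by omega) (by omega) (by omega) (by omega) (by omega),
        if_neg (by omega), if_neg (by omega), if_pos ⟨rfl, rfl⟩]
      have hterm : ∀ s ∈ Finset.Icc (m+1+2) (j-1),
          σ (m+1) ((((x ^ ((s : ℤ) - (j : ℤ)) : Rˣ) : R) * ((x : R) - 1)) • e (m+1) s)
          = (((x ^ ((s : ℤ) - (j : ℤ)) : Rˣ) : R) * ((x : R) - 1)) •
              (e (m+1+1) s - ((x : R) * y * ((x : R) - 1)) • e (m+1) (m+1+1)) := by
        intro s hs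
        simp only [Finset.mem_Icc] at hs
        rw [map_smul, hσ (m+1) (m+1) s (by omega) (by omega) (by omega) (by omega) (by omega),
          if_neg (by omega), if_pos ⟨rfl, by omega⟩]
      rw [Finset.sum_congr rfl hterm]
      simp only [smul_sub, Finset.sum_sub_distrib, smul_smul]
      rw [← Finset.sum_smul, ← Finset.sum_mul,
        geomsum x (j : ℤ) (j-1) (m+1+2) (by omega),
        show ((j-1:ℕ):ℤ) + 1 - (j:ℤ) = 0 by omega, zpow_zero, Units.val_one,
        show ((m+1+2:ℕ):ℤ) - (j:ℤ) = (((m+1+1:ℕ):ℤ) - (j:ℤ)) + 1 by push_cast; ring,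
        zpow_coe_succ]
      match_scalars <;> ring
  -- Phase B
  have claim1' : compSeq σ 1 (j - 1) (N (e 1 j)) =
      -(((x : R) ^ 2 * y) • e (j-1) j) := by
    rw [show j - 1 = (j - 2) + 1 by omega, compSeq_succ', claim1 (j-2) le_rfl,
      Finset.Icc_eq_empty (by omega), Finset.sum_empty, sub_zero,
      show j - 2 + 1 = j - 1 by omega,
      hσ (j-1) (j-1) j (by omega) (by omega) (by omega) (by omega) hj,
      if_neg (by omega), if_neg (by omega), if_pos ⟨rfl, by omega⟩,
      show j - 1 + 1 = j by omega]
  -- Phase C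
  have hcanon : ∀ (M s : ℕ),
      (-(((x ^ ((M:ℤ) + 3 - (j:ℤ)) : Rˣ) : R) * y)) •
        ((((x ^ ((s:ℤ) - (M:ℤ) - 1) : Rˣ) : R) * (1 - (x:R))) • e (j-1) s)
      = ((((x ^ ((s:ℤ) + 2 - (j:ℤ)) : Rˣ) : R)) * y * ((x:R) - 1)) • e (j-1) s := by
    intro M s
    rw [smul_smul]
    congr 1
    rw [show (s:ℤ) + 2 - (j:ℤ) = ((M:ℤ) + 3 - (j:ℤ)) + ((s:ℤ) - (M:ℤ) - 1) by ring,
      zpow_add, Units.val_mul]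
    ring
  have claim2 : ∀ L, j - 1 ≤ L → L ≤ n → compSeq σ 1 L (N (e 1 j)) =
      (-(((x ^ ((L:ℤ) + 3 - (j:ℤ)) : Rˣ) : R) * y)) •
        (e (j-1) (L+1) + ∑ s ∈ Finset.Icc j L,
          (((x ^ ((s:ℤ) - (L:ℤ) - 1) : Rˣ) : R) * (1 - (x:R))) • e (j-1) s) := by
    intro L hL
    induction L, hL using Nat.le_induction with
    | base =>
      intro _
      rw [claim1', Finset.Icc_eq_empty (by omega), Finset.sum_empty, add_zero,
        show j - 1 + 1 = j by omega,
        show ((j-1:ℕ):ℤ) + 3 - (j:ℤ) = 2 by omega]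
      match_scalars
      all_goals (rw [show (2:ℤ) = 1 + 1 by ring, zpow_coe_succ, zpow_one]; ring)
    | succ L hL ih =>
      intro hLn
      rw [compSeq_succ', ih (by omega), map_smul, map_add, map_sum,
        hσ (L+1) (j-1) (L+1) (by omega) (by omega) (by omega) (by omega) (by omega),
        if_neg (by omega), if_neg (by omega), if_neg (by omega), if_neg (by omega),
        if_neg (by omega), if_pos rfl]
      have hterm : ∀ s ∈ Finset.Icc j L,
          σ (L+1) ((((x ^ ((s:ℤ) - (L:ℤ) - 1) : Rˣ) : R) * (1 - (x:R))) • e (j-1) s)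
          = (((x ^ ((s:ℤ) - (L:ℤ) - 1) : Rˣ) : R) * (1 - (x:R))) • e (j-1) s := by
        intro s hs
        simp only [Finset.mem_Icc] at hs
        rw [map_smul, hσ (L+1) (j-1) s (by omega) (by omega) (by omega) (by omega) (by omega),
          if_neg (by omega), if_neg (by omega), if_neg (by omega), if_neg (by omega),
          if_neg (by omega), if_neg (by omega)]
      rw [Finset.sum_congr rfl hterm,
        show Finset.Icc j (L+1) = insert (L+1) (Finset.Icc j L) from by
          ext t; simp only [Finset.mem_Icc, Finset.mem_insert]; omega,
        Finset.sum_insert (by simp only [Finset.mem_Icc]; omega)]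
      simp only [smul_add, Finset.smul_sum]
      rw [Finset.sum_congr rfl (fun s _ => hcanon L s),
        Finset.sum_congr rfl (fun s _ => hcanon (L+1) s),
        hcanon (L+1) (L+1)]
      have h1 : (((x ^ (((L+1:ℕ):ℤ) + 3 - (j:ℤ)) : Rˣ) : R))
          = (((x ^ (((L:ℕ):ℤ) + 3 - (j:ℤ)) : Rˣ) : R)) * (x : R) := by
        rw [show ((L+1:ℕ):ℤ) + 3 - (j:ℤ) = (((L:ℕ):ℤ) + 3 - (j:ℤ)) + 1 by push_cast; ring,
          zpow_coe_succ]
      have h2 : (((x ^ (((L+1:ℕ):ℤ) + 2 - (j:ℤ)) : Rˣ) : R))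
          = (((x ^ (((L:ℕ):ℤ) + 3 - (j:ℤ)) : Rˣ) : R)) := by
        rw [show ((L+1:ℕ):ℤ) + 2 - (j:ℤ) = ((L:ℕ):ℤ) + 3 - (j:ℤ) by push_cast; ring]
      rw [h1, h2]
      match_scalars <;> ring
  rw [claim2 n (by omega) le_rfl,
    show ((n:ℕ):ℤ) + 3 - (j:ℤ) = ((n + 3 - j : ℕ) : ℤ) by omega, zpow_natCast]
end

section
/- One has M ∘ Γ = D ∘ M as R-linear endomorphisms of V. In other words, M conjugates the LKB image of the Garside element (in the specialization x = t q⁻¹, y = −t⁻¹) to the generalized permutation map D, so that the conjugation equation M Γ M⁻¹ = D admits a solution M. -/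
/-!
Away from the first row `Γ` just shifts: `σ_{i-1}, …, σ_{j-1}` carry `e_{i,j}` to `x e_{i-1,j-1}`
and the other generators fix it. On `e_{1,j}` the partial products `σ_L ⋯ σ_1` sweep the arc to
the right and leave behind, in each row `a`, the vector `x g_{a,L} - g_{a,L+1}` built from the
geometric rows `g_{a,m} = ∑_{s=a+1}^{m} x^{s-a} e_{a,s}`; the next generator `σ_{L+1}` merely
moves it to `x g_{a,L+1} - g_{a,L+2}`. Since `M g_{a,m} = x^{m-a} (e_{a,a+1} + ⋯ + e_{a,m})`, `M`
collapses each leftover row to a multiple of `e_{a,n+1}`, which is the shape of `D (M e_{1,j})`.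
-/

open Finset

theorem sum_Icc_add_one_add_one {M : Type*} [AddCommMonoid M] (f : ℕ → M) (a b : ℕ) :
    ∑ s ∈ Icc (a + 1) (b + 1), f s = ∑ s ∈ Icc a b, f (s + 1) := by
  rw [← map_add_right_Icc, sum_map]
  rfl

theorem pow_mul_zpow_neg_succ {G : Type*} [CommGroup G] (t q : G) (k : ℕ) :
    t ^ k * q ^ (-((k : ℤ) + 1)) = (t * q⁻¹) ^ (k + 1) * t⁻¹ := by
  rw [zpow_neg, ← Nat.cast_succ, zpow_natCast, mul_pow, inv_pow, pow_succ t, mul_right_comm,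
    mul_inv_cancel_right]

theorem pow_succ_mul_one_sub_inv {R : Type*} [Ring R] (u : Rˣ) (k : ℕ) :
    (u : R) ^ (k + 1) * (1 - ((u⁻¹ : Rˣ) : R)) = (u : R) ^ k * (u - 1) := by
  rw [mul_sub, mul_one, pow_succ, mul_assoc, Units.mul_inv, mul_one, mul_sub, mul_one]

section compSeq

variable {R V : Type*} [CommSemiring R] [AddCommMonoid V] [Module R V]

theorem compSeq_one_succ_apply (σ : ℕ → Module.End R V) (L : ℕ) (v : V) :
    compSeq σ 1 (L + 1) v = σ (L + 1) (compSeq σ 1 L v) := by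
  rw [compSeq, add_comm 1 L, Module.End.mul_apply]

theorem compSeq_apply_eq_of_step {σ : ℕ → Module.End R V} {v : V} (f : ℕ → V) {L m : ℕ}
    (hLm : L ≤ m) (hL : compSeq σ 1 L v = f L)
    (hstep : ∀ k, L ≤ k → k < m → σ (k + 1) (f k) = f (k + 1)) :
    compSeq σ 1 m v = f m := by
  induction m, hLm using Nat.le_induction with
  | base => exact hL
  | succ m hLm ih =>
    rw [compSeq_one_succ_apply, ih fun k hLk hkm => hstep k hLk (by omega),
      hstep m hLm (by omega)]

end compSeq

section LKB

variable {R V : Type*} [CommRing R] [AddCommGroup V] [Module R V]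

def IsLKBAction (n : ℕ) (x y : R) (e : ℕ → ℕ → V) (σ : ℕ → Module.End R V) : Prop :=
  ∀ k i j, 1 ≤ k → k ≤ n → 1 ≤ i → i < j → j ≤ n + 1 →
    σ k (e i j) =
      if i = k + 1 then x • e k j + (1 - x) • e i j
      else if k = i ∧ i + 1 < j then e (i + 1) j - (x * y * (x - 1)) • e k (k + 1)
      else if k = i ∧ j = i + 1 then -((x ^ 2 * y) • e k (k + 1))
      else if i < k ∧ k + 1 < j then e i j - (y * (x - 1) ^ 2) • e k (k + 1)
      else if i < k ∧ k + 1 = j then e i (j - 1) - (x * y * (x - 1)) • e k (k + 1)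
      else if k = j then x • e i (j + 1) + (1 - x) • e i j
      else e i j

def rowGeom (x : R) (e : ℕ → ℕ → V) (a m : ℕ) : V :=
  ∑ s ∈ Icc (a + 1) m, x ^ (s - a) • e a s

def rowGeomDefect (x : R) (e : ℕ → ℕ → V) (a m : ℕ) : V :=
  x • rowGeom x e a m - rowGeom x e a (m + 1)

def IsLKBBaseChange (n : ℕ) (u : Rˣ) (e : ℕ → ℕ → V) (M : Module.End R V) : Prop :=
  ∀ i j, 1 ≤ i → i < j → j ≤ n + 1 →
    M (e i j) = e i j + ∑ s ∈ Icc (i + 1) (j - 1), (1 - ((u⁻¹ : Rˣ) : R)) • e i s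

variable {n : ℕ} {x y : R} {e : ℕ → ℕ → V} {σ : ℕ → Module.End R V}

theorem rowGeom_self (a : ℕ) : rowGeom x e a a = 0 := by
  rw [rowGeom, Icc_eq_empty (by omega), sum_empty]

theorem rowGeom_succ {a m : ℕ} (ham : a ≤ m) :
    rowGeom x e a (m + 1) = rowGeom x e a m + x ^ (m + 1 - a) • e a (m + 1) :=
  sum_Icc_succ_top (by omega) _

theorem rowGeomDefect_self (a : ℕ) : rowGeomDefect x e a a = -(x • e a (a + 1)) := by
  rw [rowGeomDefect, rowGeom_succ le_rfl, rowGeom_self, Nat.add_sub_cancel_left, pow_one]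
  module

namespace IsLKBAction

theorem apply_start_succ (h : IsLKBAction n x y e σ) {k j : ℕ} (hk : 1 ≤ k) (hkj : k + 1 < j)
    (hj : j ≤ n + 1) : σ k (e (k + 1) j) = x • e k j + (1 - x) • e (k + 1) j := by
  rw [h k (k + 1) j hk (by omega) (by omega) hkj hj, if_pos rfl]

theorem apply_start_self (h : IsLKBAction n x y e σ) {k j : ℕ} (hk : 1 ≤ k) (hkj : k + 1 < j)
    (hj : j ≤ n + 1) : σ k (e k j) = e (k + 1) j - (x * y * (x - 1)) • e k (k + 1) := by
  rw [h k k j hk (by omega) hk (by omega) hj, if_neg (by omega), if_pos ⟨rfl, hkj⟩]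

theorem apply_self (h : IsLKBAction n x y e σ) {k : ℕ} (hk : 1 ≤ k) (hkn : k ≤ n) :
    σ k (e k (k + 1)) = -((x ^ 2 * y) • e k (k + 1)) := by
  rw [h k k (k + 1) hk hkn hk (by omega) (by omega), if_neg (by omega), if_neg (by omega),
    if_pos ⟨rfl, rfl⟩]

theorem apply_straddle (h : IsLKBAction n x y e σ) {k i j : ℕ} (hi : 1 ≤ i) (hik : i < k)
    (hkj : k + 1 < j) (hj : j ≤ n + 1) :
    σ k (e i j) = e i j - (y * (x - 1) ^ 2) • e k (k + 1) := by
  rw [h k i j (by omega) (by omega) hi (by omega) hj, if_neg (by omega), if_neg (by omega),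
    if_neg (by omega), if_pos ⟨hik, hkj⟩]

theorem apply_end_succ (h : IsLKBAction n x y e σ) {k i : ℕ} (hi : 1 ≤ i) (hik : i < k)
    (hkn : k ≤ n) : σ k (e i (k + 1)) = e i k - (x * y * (x - 1)) • e k (k + 1) := by
  rw [h k i (k + 1) (by omega) hkn hi (by omega) (by omega), if_neg (by omega),
    if_neg (by omega), if_neg (by omega), if_neg (by omega), if_pos ⟨hik, rfl⟩,
    Nat.add_sub_cancel]

theorem apply_end_self (h : IsLKBAction n x y e σ) {k i : ℕ} (hi : 1 ≤ i) (hik : i < k)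
    (hkn : k ≤ n) : σ k (e i k) = x • e i (k + 1) + (1 - x) • e i k := by
  rw [h k i k (by omega) hkn hi hik (by omega), if_neg (by omega), if_neg (by omega),
    if_neg (by omega), if_neg (by omega), if_neg (by omega), if_pos rfl]

theorem apply_of_lt (h : IsLKBAction n x y e σ) {k i j : ℕ} (hi : 1 ≤ i) (hij : i < j)
    (hjk : j < k) (hkn : k ≤ n) : σ k (e i j) = e i j := by
  rw [h k i j (by omega) hkn hi hij (by omega), if_neg (by omega), if_neg (by omega),
    if_neg (by omega), if_neg (by omega), if_neg (by omega), if_neg (by omega)]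

theorem apply_of_succ_lt (h : IsLKBAction n x y e σ) {k i j : ℕ} (hk : 1 ≤ k) (hki : k + 1 < i)
    (hij : i < j) (hj : j ≤ n + 1) : σ k (e i j) = e i j := by
  rw [h k i j hk (by omega) (by omega) hij hj, if_neg (by omega), if_neg (by omega),
    if_neg (by omega), if_neg (by omega), if_neg (by omega), if_neg (by omega)]

theorem apply_rowGeom_of_lt (h : IsLKBAction n x y e σ) {k a m : ℕ} (ha : 1 ≤ a) (hmk : m < k)
    (hkn : k ≤ n) : σ k (rowGeom x e a m) = rowGeom x e a m := by
  rw [rowGeom, map_sum]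
  refine sum_congr rfl fun s hs => ?_
  rw [mem_Icc] at hs
  rw [map_smul, h.apply_of_lt ha (by omega) (by omega) hkn]

theorem apply_rowGeomDefect (h : IsLKBAction n x y e σ) {a m : ℕ} (ha : 1 ≤ a) (ham : a ≤ m)
    (hmn : m < n) : σ (m + 1) (rowGeomDefect x e a m) = rowGeomDefect x e a (m + 1) := by
  rw [rowGeomDefect, rowGeomDefect, rowGeom_succ ham, rowGeom_succ (by omega : a ≤ m + 1),
    rowGeom_succ ham, map_sub, map_smul, map_add, map_smul, h.apply_rowGeom_of_lt ha
    (by omega) (by omega), h.apply_end_self ha (by omega) (by omega),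
    show m + 1 + 1 - a = m + 1 - a + 1 by omega, pow_succ]
  module

theorem apply_sum_rowGeomDefect (h : IsLKBAction n x y e σ) {A m : ℕ} (hAm : A ≤ m)
    (hmn : m < n) : σ (m + 1) (∑ a ∈ Icc 1 A, rowGeomDefect x e a m) =
      ∑ a ∈ Icc 1 A, rowGeomDefect x e a (m + 1) := by
  rw [map_sum]
  refine sum_congr rfl fun a ha => ?_
  rw [mem_Icc] at ha
  exact h.apply_rowGeomDefect ha.1 (by omega) hmn

theorem compSeq_apply_e_add_two (h : IsLKBAction n x y e σ) {i j : ℕ} (hij : i < j)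
    (hjn : j < n) : compSeq σ 1 n (e (i + 2) (j + 2)) = x • e (i + 1) (j + 1) := by
  have fixed : compSeq σ 1 i (e (i + 2) (j + 2)) = e (i + 2) (j + 2) :=
    compSeq_apply_eq_of_step (fun _ => e (i + 2) (j + 2)) i.zero_le rfl fun k _ hki =>
      h.apply_of_succ_lt (by omega) (by omega) (by omega) (by omega)
  have moving : compSeq σ 1 j (e (i + 2) (j + 2)) =
      x • e (i + 1) (j + 2) + (1 - x) • e (j + 1) (j + 2) := by
    refine compSeq_apply_eq_of_step (fun k => x • e (i + 1) (j + 2) + (1 - x) • e (k + 1) (j + 2))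
      (L := i + 1) hij ?_ fun k hik hkj => ?_
    · rw [compSeq_one_succ_apply, fixed, h.apply_start_succ (by omega) (by omega) (by omega)]
    · simp only [map_add, map_smul]
      rw [h.apply_straddle (by omega) (by omega) (by omega) (by omega),
        h.apply_start_self (by omega) (by omega) (by omega)]
      module
  refine compSeq_apply_eq_of_step (fun _ => x • e (i + 1) (j + 1)) (L := j + 1) hjn ?_
    fun k hjk hkn => ?_
  · rw [compSeq_one_succ_apply, moving, map_add, map_smul, map_smul,
      h.apply_end_succ (by omega) (by omega) (by omega), h.apply_self (by omega) (by omega)]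
    module
  · rw [map_smul, h.apply_of_lt (by omega) (by omega) (by omega) (by omega)]

theorem compSeq_apply_e_one (h : IsLKBAction n x y e σ) {j : ℕ} (hjn : j < n) :
    compSeq σ 1 n (e 1 (j + 2)) = y • ((x - 1) • ∑ a ∈ Icc 1 j, rowGeomDefect x e a n +
      x • rowGeomDefect x e (j + 1) n) := by
  have sweeping : compSeq σ 1 j (e 1 (j + 2)) =
      e (j + 1) (j + 2) + (y * (x - 1)) • ∑ a ∈ Icc 1 j, rowGeomDefect x e a j := by
    refine compSeq_apply_eq_of_step
      (fun k => e (k + 1) (j + 2) + (y * (x - 1)) • ∑ a ∈ Icc 1 k, rowGeomDefect x e a k)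
      j.zero_le (by simp [compSeq]) fun k _ hkj => ?_
    rw [map_add, map_smul, h.apply_sum_rowGeomDefect le_rfl (by omega),
      h.apply_start_self (by omega) (by omega) (by omega), sum_Icc_succ_top (by omega),
      rowGeomDefect_self]
    module
  refine compSeq_apply_eq_of_step (fun k => y • ((x - 1) • ∑ a ∈ Icc 1 j, rowGeomDefect x e a k +
      x • rowGeomDefect x e (j + 1) k)) (L := j + 1) hjn ?_ fun k hjk hkn => ?_
  · rw [compSeq_one_succ_apply, sweeping, map_add, map_smul,
      h.apply_sum_rowGeomDefect le_rfl (by omega), h.apply_self (by omega) (by omega),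
      rowGeomDefect_self]
    module
  · rw [map_smul, map_add, map_smul, map_smul, h.apply_sum_rowGeomDefect (by omega) hkn,
      h.apply_rowGeomDefect (by omega) hjk hkn]

end IsLKBAction

theorem IsLKBBaseChange.apply_rowGeom {M : Module.End R V} {u : Rˣ}
    (hM : IsLKBBaseChange n u e M) {a m : ℕ} (ha : 1 ≤ a) (ham : a ≤ m) (hmn : m ≤ n + 1) :
    M (rowGeom (u : R) e a m) = (u : R) ^ (m - a) • ∑ s ∈ Icc (a + 1) m, e a s := by
  induction m, ham using Nat.le_induction with
  | base => rw [rowGeom_self, map_zero, Icc_eq_empty (by omega), sum_empty, smul_zero]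
  | succ m ham ih =>
    rw [rowGeom_succ ham, map_add, map_smul, ih (by omega), hM a (m + 1) ha (by omega) hmn,
      Nat.add_sub_cancel, sum_Icc_succ_top (by omega), ← smul_sum, smul_add, smul_smul,
      show m + 1 - a = m - a + 1 by omega, pow_succ_mul_one_sub_inv, pow_succ]
    module

theorem IsLKBBaseChange.apply_rowGeomDefect {M : Module.End R V} {u : Rˣ}
    (hM : IsLKBBaseChange n u e M) {a m : ℕ} (ha : 1 ≤ a) (ham : a ≤ m) (hmn : m ≤ n) :
    M (rowGeomDefect (u : R) e a m) = -((u : R) ^ (m + 1 - a) • e a (m + 1)) := by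
  rw [rowGeomDefect, map_sub, map_smul, hM.apply_rowGeom ha ham (by omega),
    hM.apply_rowGeom ha (by omega) (by omega), sum_Icc_succ_top (by omega), smul_smul,
    show m + 1 - a = m - a + 1 by omega, pow_succ]
  module

theorem IsLKBBaseChange.apply_compSeq_e_one {u : Rˣ} {M : Module.End R V}
    (hM : IsLKBBaseChange n u e M) (h : IsLKBAction n (u : R) y e σ) {j : ℕ} (hjn : j < n) :
    M (compSeq σ 1 n (e 1 (j + 2))) = -(y • ((u - 1 : R) • ∑ a ∈ Icc 1 j,
      (u : R) ^ (n + 1 - a) • e a (n + 1) + (u : R) ^ (n - j + 1) • e (j + 1) (n + 1))) := by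
  rw [h.compSeq_apply_e_one hjn, map_smul, map_add, map_smul, map_smul, map_sum,
    sum_congr rfl fun a ha =>
      hM.apply_rowGeomDefect (mem_Icc.1 ha).1 ((mem_Icc.1 ha).2.trans hjn.le) le_rfl,
    hM.apply_rowGeomDefect (by omega) (by omega) le_rfl, sum_neg_distrib,
    show n + 1 - (j + 1) = n - j by omega, pow_succ]
  module

theorem val_pow_mul_zpow_eq_neg_mul_pow {t q u : Rˣ} (hu : u = t * q⁻¹)
    (hy : y = -((t⁻¹ : Rˣ) : R)) {j m : ℕ} (hjm : j ≤ m + 2) :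
    ((t ^ (m + 2 - j) * q ^ ((j : ℤ) - m - 3) : Rˣ) : R) = -(y * (u : R) ^ (m + 3 - j)) := by
  rw [show (j : ℤ) - m - 3 = -(((m + 2 - j : ℕ) : ℤ) + 1) by omega,
    show m + 3 - j = m + 2 - j + 1 by omega, pow_mul_zpow_neg_succ, ← hu, Units.val_mul,
    Units.val_pow_eq_pow_val, hy]
  ring

theorem perm_baseChange_e_one {t q u : Rˣ} {M D : Module.End R V} (hu : u = t * q⁻¹)
    (hy : y = -((t⁻¹ : Rˣ) : R)) (hM : IsLKBBaseChange n u e M)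
    (hD : ∀ j, 2 ≤ j → j ≤ n + 1 →
      D (e 1 j) = ((t ^ (n + 2 - j) * q ^ ((j : ℤ) - (n : ℤ) - 3) : Rˣ) : R) • e (j - 1) (n + 1))
    {j : ℕ} (hjn : j < n) :
    D (M (e 1 (j + 2))) = -(y • ((u - 1 : R) • ∑ a ∈ Icc 1 j,
      (u : R) ^ (n + 1 - a) • e a (n + 1) + (u : R) ^ (n - j + 1) • e (j + 1) (n + 1))) := by
  have hterm : ∀ a ∈ Icc 1 j, D ((1 - ((u⁻¹ : Rˣ) : R)) • e 1 (a + 1)) =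
      (-(y * (u - 1))) • (u : R) ^ (n + 1 - a) • e a (n + 1) := fun a ha => by
    rw [mem_Icc] at ha
    rw [map_smul, hD (a + 1) (by omega) (by omega),
      val_pow_mul_zpow_eq_neg_mul_pow hu hy (by omega),
      Nat.add_sub_cancel, smul_smul, smul_smul, show n + 3 - (a + 1) = n + 1 - a + 1 by omega]
    congr 1
    linear_combination (-y) * pow_succ_mul_one_sub_inv u (n + 1 - a)
  rw [hM 1 (j + 2) le_rfl (by omega) (by omega), map_add, map_sum,
    hD (j + 2) (by omega) (by omega), val_pow_mul_zpow_eq_neg_mul_pow hu hy (by omega),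
    show j + 2 - 1 = j + 1 by omega, sum_Icc_add_one_add_one, sum_congr rfl hterm, ← smul_sum,
    show n + 3 - (j + 2) = n - j + 1 by omega]
  module

theorem perm_baseChange_e_add_two {t q u : Rˣ} {M D : Module.End R V} (hu : u = t * q⁻¹)
    (hM : IsLKBBaseChange n u e M)
    (hD : ∀ i j, 2 ≤ i → i < j → j ≤ n + 1 →
      D (e i j) = ((t * q⁻¹ : Rˣ) : R) • e (i - 1) (j - 1))
    {i j : ℕ} (hij : i < j) (hjn : j < n) :
    D (M (e (i + 2) (j + 2))) = (u : R) • M (e (i + 1) (j + 1)) := by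
  have hterm : ∀ s ∈ Icc (i + 2) j, D ((1 - ((u⁻¹ : Rˣ) : R)) • e (i + 2) (s + 1)) =
      (u : R) • (1 - ((u⁻¹ : Rˣ) : R)) • e (i + 1) s := fun s hs => by
    rw [mem_Icc] at hs
    rw [map_smul, hD (i + 2) (s + 1) (by omega) (by omega) (by omega), ← hu, smul_comm]
    rfl
  rw [hM (i + 1) (j + 1) (by omega) (by omega) (by omega),
    hM (i + 2) (j + 2) (by omega) (by omega) (by omega), map_add, map_sum,
    hD (i + 2) (j + 2) (by omega) (by omega) (by omega), ← hu,
    show j + 2 - 1 = j + 1 by omega, sum_Icc_add_one_add_one, sum_congr rfl hterm,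
    smul_add, smul_sum]
  rfl

end LKB

theorem M_conjugates_Gamma_to_D_general {R : Type*} [CommRing R] (q t : Rˣ)
    (x : Rˣ) (hx : x = t * q⁻¹) (y : R) (hy : y = -((t⁻¹ : Rˣ) : R))
    {V : Type*} [AddCommGroup V] [Module R V]
    (n : ℕ)
    (e : ℕ → ℕ → V)
    (b : Module.Basis {p : ℕ × ℕ // 1 ≤ p.1 ∧ p.1 < p.2 ∧ p.2 ≤ n + 1} R V)
    (hb : ∀ p : {p : ℕ × ℕ // 1 ≤ p.1 ∧ p.1 < p.2 ∧ p.2 ≤ n + 1}, b p = e p.1.1 p.1.2)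
    (σ : ℕ → Module.End R V)
    (hσ : ∀ k i j, 1 ≤ k → k ≤ n → 1 ≤ i → i < j → j ≤ n + 1 →
      σ k (e i j) =
        if i = k + 1 then (x : R) • e k j + (1 - (x : R)) • e i j
        else if k = i ∧ i + 1 < j then
          e (i + 1) j - ((x : R) * y * ((x : R) - 1)) • e k (k + 1)
        else if k = i ∧ j = i + 1 then -(((x : R) ^ 2 * y) • e k (k + 1))
        else if i < k ∧ k + 1 < j then e i j - (y * ((x : R) - 1) ^ 2) • e k (k + 1)
        else if i < k ∧ k + 1 = j then
          e i (j - 1) - ((x : R) * y * ((x : R) - 1)) • e k (k + 1)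
        else if k = j then (x : R) • e i (j + 1) + (1 - (x : R)) • e i j
        else e i j)
    (M : Module.End R V)
    (hM : ∀ i j, 1 ≤ i → i < j → j ≤ n + 1 →
      M (e i j) = e i j + ∑ s ∈ Finset.Icc (i + 1) (j - 1),
        (1 - ((x⁻¹ : Rˣ) : R)) • e i s)
    (D : Module.End R V)
    (hD1 : ∀ j, 2 ≤ j → j ≤ n + 1 →
      D (e 1 j) = ((t ^ (n + 2 - j) * q ^ ((j : ℤ) - (n : ℤ) - 3) : Rˣ) : R) •
        e (j - 1) (n + 1))
    (hD2 : ∀ i j, 2 ≤ i → i < j → j ≤ n + 1 →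
      D (e i j) = ((t * q⁻¹ : Rˣ) : R) • e (i - 1) (j - 1)) :
    M * compSeq σ 1 n = D * M := by
  have hΓ : IsLKBAction n (x : R) y e σ := hσ
  have hM : IsLKBBaseChange n x e M := hM
  refine b.ext fun ⟨⟨i, j⟩, hi, hij, hj⟩ => ?_
  obtain ⟨j, rfl⟩ : ∃ j', j = j' + 2 := ⟨j - 2, by omega⟩
  simp only [hb, Module.End.mul_apply]
  rcases i with _ | _ | i
  · omega
  · rw [hM.apply_compSeq_e_one hΓ (by omega), perm_baseChange_e_one hx hy hM hD1 (by omega)]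
  · rw [hΓ.compSeq_apply_e_add_two (by omega) (by omega), map_smul,
      perm_baseChange_e_add_two hx hM hD2 (by omega) (by omega)]

/-- In the specialization `x = t q⁻¹`, `y = -t⁻¹`, the base-change endomorphism `M`
conjugates the LKB image `Γ = σ_n ∘ ⋯ ∘ σ_1` of the Garside element to the generalized
permutation map `D`: one has `M ∘ Γ = D ∘ M`, i.e. the equation `M Γ M⁻¹ = D` admits the
solution `M`. -/
theorem M_conjugates_Gamma_to_D {R : Type*} [CommRing R] (q t : Rˣ)
    (x : Rˣ) (hx : x = t * q⁻¹) (y : R) (hy : y = -((t⁻¹ : Rˣ) : R))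
    {V : Type*} [AddCommGroup V] [Module R V]
    (n : ℕ) (hn : 1 ≤ n)
    (e : ℕ → ℕ → V)
    (b : Module.Basis {p : ℕ × ℕ // 1 ≤ p.1 ∧ p.1 < p.2 ∧ p.2 ≤ n + 1} R V)
    (hb : ∀ p : {p : ℕ × ℕ // 1 ≤ p.1 ∧ p.1 < p.2 ∧ p.2 ≤ n + 1}, b p = e p.1.1 p.1.2)
    (σ : ℕ → Module.End R V)
    (hσ : ∀ k i j, 1 ≤ k → k ≤ n → 1 ≤ i → i < j → j ≤ n + 1 →
      σ k (e i j) =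
        if i = k + 1 then (x : R) • e k j + (1 - (x : R)) • e i j
        else if k = i ∧ i + 1 < j then
          e (i + 1) j - ((x : R) * y * ((x : R) - 1)) • e k (k + 1)
        else if k = i ∧ j = i + 1 then -(((x : R) ^ 2 * y) • e k (k + 1))
        else if i < k ∧ k + 1 < j then e i j - (y * ((x : R) - 1) ^ 2) • e k (k + 1)
        else if i < k ∧ k + 1 = j then
          e i (j - 1) - ((x : R) * y * ((x : R) - 1)) • e k (k + 1)
        else if k = j then (x : R) • e i (j + 1) + (1 - (x : R)) • e i j
        else e i j)
    (M : Module.End R V)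
    (hM : ∀ i j, 1 ≤ i → i < j → j ≤ n + 1 →
      M (e i j) = e i j + ∑ s ∈ Finset.Icc (i + 1) (j - 1),
        (1 - ((x⁻¹ : Rˣ) : R)) • e i s)
    (D : Module.End R V)
    (hD1 : ∀ j, 2 ≤ j → j ≤ n + 1 →
      D (e 1 j) = ((t ^ (n + 2 - j) * q ^ ((j : ℤ) - (n : ℤ) - 3) : Rˣ) : R) •
        e (j - 1) (n + 1))
    (hD2 : ∀ i j, 2 ≤ i → i < j → j ≤ n + 1 →
      D (e i j) = ((t * q⁻¹ : Rˣ) : R) • e (i - 1) (j - 1)) :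
    M * compSeq σ 1 n = D * M :=
  M_conjugates_Gamma_to_D_general q t x hx y hy n e b hb σ hσ M hM D hD1 hD2
end

section
/- For every integer k with 1 ≤ k ≤ n, one has D_k ∘ M_0 = M_k ∘ (σ_k ∘ σ_{k−1} ∘ ⋯ ∘ σ_1) as R-linear endomorphisms of V. -/
/-!
Let `L_k` be the operator `swapImage` below: up to scalars (`x = t q⁻¹`, and `ρ = x q⁻¹` on
`e_{k,k+1}`) it exchanges the indices `k` and `k + 1` of the basis vectors. Then
`D_k = L_k ∘ D_(k-1)` with `D_0 = 1`, and `L_k ∘ M_(k-1) = M_k ∘ σ_k` with `M_0` as given, so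
the theorem follows by induction on `k`. Both identities are checked on basis vectors. With
`T_{ij} = M_0 e_{ij}` (`tailVec`), one has
`M_k e_{ij} = T_{ij} + [i ≤ k, k + 2 ≤ j] α (T_{k+1,j} - e_{i,k+1})`, and the second identity
reduces to splitting the row sums in `T` at the columns `k` and `k + 1`; the only relation
between the scalars it needs is `x α = x - 1`.
-/

open Finset

lemma pow_mul_zpow_mul_mul_inv {G : Type*} [CommGroup G] (a b : G) (m : ℕ) (z : ℤ) :
    a ^ m * b ^ z * (a * b⁻¹) = a ^ (m + 1) * b ^ (z - 1) := by
  rw [pow_succ, zpow_sub_one, mul_mul_mul_comm]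

lemma Units.val_mul_one_sub_val_inv {R : Type*} [CommRing R] (u : Rˣ) :
    (u : R) * (1 - ↑u⁻¹) = u - 1 := by
  linear_combination -(Units.mul_inv u)

lemma compSeq_one_succ {R : Type*} [CommSemiring R] {V : Type*} [AddCommMonoid V] [Module R V]
    (σ : ℕ → Module.End R V) (k : ℕ) : compSeq σ 1 (k + 1) = σ (k + 1) * compSeq σ 1 k := by
  rw [compSeq, Nat.add_comm]

namespace LKB

section Coefficients

variable {R : Type*} [CommRing R] (u : Rˣ) (c : R)

lemma neg_sq_mul_neg_inv_mul : -((u : R) ^ 2 * -(↑u⁻¹ * c)) = u * c := by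
  linear_combination u * c * Units.mul_inv u

lemma neg_mul_neg_inv_mul_mul_sub_one :
    -((u : R) * -(↑u⁻¹ * c) * (u - 1)) = (1 - ↑u⁻¹) * (u * c) := by
  linear_combination c * u * Units.mul_inv u

lemma neg_neg_inv_mul_mul_sub_one_sq :
    -(-(↑u⁻¹ * c) * ((u : R) - 1) ^ 2) = (1 - ↑u⁻¹) ^ 2 * (u * c) := by
  linear_combination c * (u - ↑u⁻¹) * Units.mul_inv u

end Coefficients

variable {R : Type*} [CommRing R] {V : Type*} [AddCommGroup V] [Module R V]

def MapsBasisTo (n : ℕ) (e : ℕ → ℕ → V) (F : Module.End R V) (f : ℕ → ℕ → V) : Prop :=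
  ∀ i j, 1 ≤ i → i < j → j ≤ n + 1 → F (e i j) = f i j

section Basis

variable {n : ℕ} {e : ℕ → ℕ → V}
  (b : Module.Basis {p : ℕ × ℕ // 1 ≤ p.1 ∧ p.1 < p.2 ∧ p.2 ≤ n + 1} R V)

lemma exists_mapsBasisTo (hb : ∀ p, b p = e p.1.1 p.1.2) (f : ℕ → ℕ → V) :
    ∃ F : Module.End R V, MapsBasisTo n e F f :=
  ⟨b.constr R fun p => f p.1.1 p.1.2, fun i j hi hij hjn => by
    rw [← hb ⟨(i, j), hi, hij, hjn⟩, Module.Basis.constr_basis]⟩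

lemma eq_of_mapsBasisTo (hb : ∀ p, b p = e p.1.1 p.1.2) {F G : Module.End R V} {f : ℕ → ℕ → V}
    (hF : MapsBasisTo n e F f) (hG : MapsBasisTo n e G f) : F = G :=
  b.ext fun ⟨(i, j), hi, hij, hjn⟩ => by rw [hb, hF i j hi hij hjn, hG i j hi hij hjn]

end Basis

-- `mImage`, `dImage`, `sigmaImage` and `swapImage` (at `k i j`) are the images of `e i j`
-- under `M_k`, `D_k`, `σ_k` and `L_k`.

def swapImage (x ρ : R) (e : ℕ → ℕ → V) (k i j : ℕ) : V :=
  if i < k ∧ j = k then x • e i (k + 1)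
  else if i < k ∧ j = k + 1 then e i k
  else if i = k ∧ j = k + 1 then ρ • e k (k + 1)
  else if i = k then e (k + 1) j
  else if i = k + 1 then x • e k j
  else e i j

def rowSum (α : R) (e : ℕ → ℕ → V) (i a b : ℕ) : V := ∑ s ∈ Ico a b, α • e i s

def tailVec (α : R) (e : ℕ → ℕ → V) (i j : ℕ) : V := e i j + rowSum α e i (i + 1) j

def mImage (α : R) (e : ℕ → ℕ → V) (k i j : ℕ) : V :=
  e i j
    + (∑ j' ∈ (Icc (i + 1) (j - 1)).filter (fun j' => j' ≠ k + 1), α • e i j')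
    + (if i ≤ k then ∑ j' ∈ Icc (k + 2) (j - 1), (α ^ 2) • e (k + 1) j' else 0)
    + (if i ≤ k ∧ k + 2 ≤ j then α • e (k + 1) j else 0)

def dImage (t q : Rˣ) (e : ℕ → ℕ → V) (k i j : ℕ) : V :=
  if i = 1 ∧ k + 1 < j then e (k + 1) j
  else if i = 1 ∧ k + 1 = j then ((t * q⁻¹ * q⁻¹ : Rˣ) : R) • e k (k + 1)
  else if i = 1 ∧ j ≤ k then
    ((t ^ (k + 2 - j) * q ^ ((j : ℤ) - (k : ℤ) - 3) : Rˣ) : R) • e (j - 1) (k + 1)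
  else if i ≤ k ∧ j ≤ k + 1 then ((t * q⁻¹ : Rˣ) : R) • e (i - 1) (j - 1)
  else if i ≤ k ∧ k + 2 ≤ j then ((t * q⁻¹ : Rˣ) : R) • e (i - 1) j
  else if i = k + 1 then ((t * q⁻¹ : Rˣ) : R) • e (i - 1) j
  else e i j

-- The coefficients of `σ_k` rewritten with `ρ = x q⁻¹`: `-x²y = ρ`, `-xy(x-1) = αρ`,
-- `-y(x-1)² = α²ρ`.
def sigmaImage (x α ρ : R) (e : ℕ → ℕ → V) (k i j : ℕ) : V :=
  if i = k + 1 then x • e k j + (1 - x) • e i j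
  else if k = i ∧ i + 1 < j then e (i + 1) j + (α * ρ) • e k (k + 1)
  else if k = i ∧ j = i + 1 then ρ • e k (k + 1)
  else if i < k ∧ k + 1 < j then e i j + (α ^ 2 * ρ) • e k (k + 1)
  else if i < k ∧ k + 1 = j then e i (j - 1) + (α * ρ) • e k (k + 1)
  else if k = j then x • e i (j + 1) + (1 - x) • e i j
  else e i j

section Images

variable {α : R} {e : ℕ → ℕ → V}

lemma rowSum_self (i a : ℕ) : rowSum α e i a a = 0 := by simp [rowSum]

lemma rowSum_eq_smul_add {i a b : ℕ} (h : a < b) :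
    rowSum α e i a b = α • e i a + rowSum α e i (a + 1) b :=
  sum_eq_sum_Ico_succ_bot h _

lemma rowSum_succ_right {i a b : ℕ} (h : a ≤ b) :
    rowSum α e i a (b + 1) = rowSum α e i a b + α • e i b :=
  sum_Ico_succ_top h _

lemma rowSum_add_rowSum {i a m b : ℕ} (ham : a ≤ m) (hmb : m ≤ b) :
    rowSum α e i a m + rowSum α e i m b = rowSum α e i a b :=
  sum_Ico_consecutive _ ham hmb

lemma map_rowSum {L : Module.End R V} {u : ℕ → ℕ → V} {i i' a b : ℕ}
    (h : ∀ s, a ≤ s → s < b → L (e i s) = u i' s) :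
    L (rowSum α e i a b) = rowSum α u i' a b := by
  simp only [rowSum, map_sum, map_smul]
  exact sum_congr rfl fun s hs => by rw [h s (mem_Ico.1 hs).1 (mem_Ico.1 hs).2]

lemma mImage_eq (k i j : ℕ) :
    mImage α e k i j = tailVec α e i j +
      if i ≤ k ∧ k + 2 ≤ j then α • (tailVec α e (k + 1) j - e i (k + 1)) else 0 := by
  have hIcc (a : ℕ) : Icc (a + 1) (j - 1) = Ico (a + 1) j := by
    rw [Icc_add_one_sub_one_eq_Ioo, Ico_add_one_left_eq_Ioo]
  simp only [mImage, tailVec, rowSum, hIcc, filter_ne']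
  split_ifs with hk hk'
  · rw [sum_erase_eq_sub (by simp; omega), show k + 1 + 1 = k + 2 by rfl, smul_sub, smul_add,
      smul_sum, pow_two]
    simp only [smul_smul]
    abel
  · rw [erase_eq_of_notMem (by simp; omega), Ico_eq_empty_of_le (show j ≤ k + 1 + 1 by omega)]
    simp
  · omega
  · rw [erase_eq_of_notMem (by simp; omega)]
    simp

lemma mImage_zero {i j : ℕ} (hi : 1 ≤ i) :
    mImage α e 0 i j = e i j + ∑ s ∈ Icc (i + 1) (j - 1), α • e i s := by
  rw [mImage, filter_true_of_mem fun s hs => by simp at hs; omega, if_neg (by omega),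
    if_neg (by omega), add_zero, add_zero]

lemma dImage_zero {t q : Rˣ} {i j : ℕ} (hi : 1 ≤ i) (hij : i < j) :
    dImage t q e 0 i j = e i j := by
  rcases hi.eq_or_lt with rfl | hi
  · simp (disch := omega) only [dImage, if_pos, zero_add, true_and]
  · simp (disch := omega) only [dImage, if_neg]

end Images

section Swap

variable {x ρ α : R} {e : ℕ → ℕ → V} {n k : ℕ} {L : Module.End R V}

lemma swap_rowSum_eq_self (hL : MapsBasisTo n e L (swapImage x ρ e k)) {i a b : ℕ}
    (hi : 1 ≤ i) (ha : i < a) (hb : b ≤ n + 1) (h : b ≤ k ∨ (k + 2 ≤ a ∧ i ≠ k ∧ i ≠ k + 1)) :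
    L (rowSum α e i a b) = rowSum α e i a b :=
  map_rowSum fun s h1 h2 => by
    rw [hL i s hi (by omega) (by omega)]
    simp (disch := omega) only [swapImage, if_neg]

lemma swap_rowSum_of_row_eq (hL : MapsBasisTo n e L (swapImage x ρ e k)) {a b : ℕ}
    (hk : 1 ≤ k) (ha : k + 2 ≤ a) (hb : b ≤ n + 1) :
    L (rowSum α e k a b) = rowSum α e (k + 1) a b :=
  map_rowSum fun s h1 h2 => by
    rw [hL k s hk (by omega) (by omega)]
    simp (disch := omega) only [swapImage, if_neg, ↓reduceIte, true_and]

lemma swap_rowSum_of_row_eq_succ (hL : MapsBasisTo n e L (swapImage x ρ e k)) {a b : ℕ}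
    (ha : k + 2 ≤ a) (hb : b ≤ n + 1) :
    L (rowSum α e (k + 1) a b) = x • rowSum α e k a b := by
  rw [map_rowSum (u := fun i s => x • e i s) (i' := k) fun s h1 h2 => by
    rw [hL (k + 1) s (by omega) (by omega) (by omega)]
    simp (disch := omega) only [swapImage, if_neg, ↓reduceIte]]
  simp only [rowSum, smul_sum, smul_comm x α]

lemma swap_mImage_of_lt_or_le (hL : MapsBasisTo n e L (swapImage x ρ e (k + 1))) {i j : ℕ}
    (hi : 1 ≤ i) (hij : i < j) (hjn : j ≤ n + 1) (h : j < k + 1 ∨ k + 3 ≤ i) :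
    L (mImage α e k i j) = mImage α e (k + 1) i j := by
  simp (disch := omega) only [mImage_eq, if_neg, add_zero, tailVec, map_add, hL _ _,
    swapImage, swap_rowSum_eq_self hL]

lemma swap_mImage_add_two (hL : MapsBasisTo n e L (swapImage x ρ e (k + 1)))
    (hxα : x * α = x - 1) {j : ℕ} (hj : k + 2 < j) (hjn : j ≤ n + 1) :
    L (mImage α e k (k + 2) j) =
      x • mImage α e (k + 1) (k + 1) j + (1 - x) • mImage α e (k + 1) (k + 2) j := by
  simp (disch := omega) only [mImage_eq, if_pos, if_neg, add_zero, tailVec]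
  rw [rowSum_eq_smul_add (show k + 1 + 1 < j by omega)]
  simp (disch := omega) only [map_add, hL _ _, swapImage, if_neg, ↓reduceIte,
    swap_rowSum_of_row_eq_succ hL, add_assoc, Nat.reduceAdd]
  linear_combination (norm := module) -(hxα • (e (k + 2) j + rowSum α e (k + 2) (k + 3) j))

lemma swap_mImage_succ_add_two (hL : MapsBasisTo n e L (swapImage x ρ e (k + 1)))
    (hkn : k + 1 ≤ n) :
    L (mImage α e k (k + 1) (k + 2)) = ρ • mImage α e (k + 1) (k + 1) (k + 2) := by
  simp (disch := omega) only [mImage_eq, if_neg, add_zero, tailVec, rowSum_self, hL _ _,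
    swapImage, ↓reduceIte, and_self, and_true, add_assoc, Nat.reduceAdd]

lemma swap_mImage_succ_of_lt (hL : MapsBasisTo n e L (swapImage x ρ e (k + 1))) {j : ℕ}
    (hj : k + 2 < j) (hjn : j ≤ n + 1) :
    L (mImage α e k (k + 1) j) =
      mImage α e (k + 1) (k + 2) j + (α * ρ) • mImage α e (k + 1) (k + 1) (k + 2) := by
  simp (disch := omega) only [mImage_eq, if_neg, add_zero, tailVec, rowSum_self]
  rw [rowSum_eq_smul_add (show k + 1 + 1 < j by omega)]
  simp (disch := omega) only [map_add, map_smul, hL _ _, swapImage, if_neg, ↓reduceIte,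
    and_self, and_true, true_and, swap_rowSum_of_row_eq hL, add_assoc, Nat.reduceAdd]
  module

lemma swap_mImage_of_lt_add_two (hL : MapsBasisTo n e L (swapImage x ρ e (k + 1))) {i : ℕ}
    (hi : 1 ≤ i) (hik : i < k + 1) (hkn : k + 1 ≤ n) :
    L (mImage α e k i (k + 2)) =
      mImage α e (k + 1) i (k + 1) + (α * ρ) • mImage α e (k + 1) (k + 1) (k + 2) := by
  simp (disch := omega) only [mImage_eq, if_pos, if_neg, add_zero, tailVec, rowSum_self]
  rw [show k + 2 = k + 1 + 1 from rfl, rowSum_succ_right (show i + 1 ≤ k + 1 by omega)]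
  simp (disch := omega) only [map_add, map_sub, map_smul, hL _ _, swapImage, if_pos, if_neg,
    ↓reduceIte, and_self, and_true, swap_rowSum_eq_self hL, add_assoc, Nat.reduceAdd]
  module

lemma swap_mImage_of_lt_of_lt (hL : MapsBasisTo n e L (swapImage x ρ e (k + 1))) {i j : ℕ}
    (hi : 1 ≤ i) (hik : i < k + 1) (hj : k + 2 < j) (hjn : j ≤ n + 1) :
    L (mImage α e k i j) =
      mImage α e (k + 1) i j + (α ^ 2 * ρ) • mImage α e (k + 1) (k + 1) (k + 2) := by
  simp (disch := omega) only [mImage_eq, if_pos, if_neg, add_zero, tailVec, rowSum_self]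
  rw [← rowSum_add_rowSum (show i + 1 ≤ k + 1 by omega) (show k + 1 ≤ j by omega),
    rowSum_eq_smul_add (show k + 1 < j by omega),
    rowSum_eq_smul_add (show k + 1 + 1 < j by omega),
    rowSum_eq_smul_add (i := k + 1) (show k + 1 + 1 < j by omega)]
  simp (disch := omega) only [map_add, map_sub, map_smul, hL _ _, swapImage, if_pos, if_neg,
    ↓reduceIte, and_self, and_true, true_and, swap_rowSum_eq_self hL, swap_rowSum_of_row_eq hL,
    add_assoc, Nat.reduceAdd]
  module

lemma swap_mImage_of_lt_succ (hL : MapsBasisTo n e L (swapImage x ρ e (k + 1)))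
    (hxα : x * α = x - 1) {i : ℕ} (hi : 1 ≤ i) (hik : i < k + 1) (hkn : k + 1 ≤ n) :
    L (mImage α e k i (k + 1)) =
      x • mImage α e (k + 1) i (k + 2) + (1 - x) • mImage α e (k + 1) i (k + 1) := by
  simp (disch := omega) only [mImage_eq, if_neg, add_zero, tailVec]
  rw [show k + 2 = k + 1 + 1 from rfl, rowSum_succ_right (show i + 1 ≤ k + 1 by omega)]
  simp (disch := omega) only [map_add, hL _ _, swapImage, if_pos, and_true,
    swap_rowSum_eq_self hL, add_assoc, Nat.reduceAdd]
  linear_combination (norm := module) -(hxα • e i (k + 1))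

end Swap

lemma swap_mImage_eq_sigmaImage {x ρ α : R} {e : ℕ → ℕ → V} {n k : ℕ}
    {L M' : Module.End R V} (hL : MapsBasisTo n e L (swapImage x ρ e (k + 1)))
    (hM' : MapsBasisTo n e M' (mImage α e (k + 1))) (hxα : x * α = x - 1) (hkn : k + 1 ≤ n)
    {i j : ℕ} (hi : 1 ≤ i) (hij : i < j) (hjn : j ≤ n + 1) :
    L (mImage α e k i j) = M' (sigmaImage x α ρ e (k + 1) i j) := by
  unfold sigmaImage
  split_ifs with h₁ h₂ h₃ h₄ h₅ h₆
  · obtain rfl := h₁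
    simp (disch := omega) only [map_add, map_smul, hM' _ _]
    exact swap_mImage_add_two hL hxα (by omega) hjn
  · obtain ⟨rfl, hj⟩ := h₂
    simp (disch := omega) only [map_add, map_smul, hM' _ _]
    exact swap_mImage_succ_of_lt hL hj hjn
  · obtain ⟨rfl, rfl⟩ := h₃
    simp (disch := omega) only [map_smul, hM' _ _]
    exact swap_mImage_succ_add_two hL (by omega)
  · simp (disch := omega) only [map_add, map_smul, hM' _ _]
    exact swap_mImage_of_lt_of_lt hL hi h₄.1 (by omega) hjn
  · obtain ⟨hik, rfl⟩ := h₅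
    simp (disch := omega) only [map_add, map_smul, hM' _ _, Nat.add_sub_cancel]
    exact swap_mImage_of_lt_add_two hL hi hik (by omega)
  · subst h₆
    simp (disch := omega) only [map_add, map_smul, hM' _ _]
    exact swap_mImage_of_lt_succ hL hxα hi (by omega) hkn
  · rw [hM' i j hi hij hjn]
    exact swap_mImage_of_lt_or_le hL hi hij hjn (by omega)

lemma swap_dImage {t q x : Rˣ} {e : ℕ → ℕ → V} {n k : ℕ} {L : Module.End R V}
    (hx : x = t * q⁻¹)
    (hL : MapsBasisTo n e L (swapImage (x : R) (x * ((q⁻¹ : Rˣ) : R)) e (k + 1)))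
    (hkn : k + 1 ≤ n) {i j : ℕ} (hi : 1 ≤ i) (hij : i < j) (hjn : j ≤ n + 1) :
    L (dImage t q e k i j) = dImage t q e (k + 1) i j := by
  subst hx
  rw [← Units.val_mul] at hL
  unfold dImage
  split_ifs <;> (try omega) <;>
    simp (disch := omega) only [map_smul, hL _ _, swapImage, if_pos, if_neg, ↓reduceIte,
      and_true, true_and, smul_smul, ← Units.val_mul] <;>
    congr 2 <;> try omega
  -- what is left are the scalar identities in the cases `i = 1`, `j ≤ k + 1`
  · obtain ⟨-, rfl⟩ := ‹i = 1 ∧ k + 1 = j›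
    rw [show t * q⁻¹ * q⁻¹ = t ^ 1 * q ^ (-2 : ℤ) by rw [pow_one, mul_assoc, ← mul_inv, zpow_neg,
      zpow_two], pow_mul_zpow_mul_mul_inv]
    congr 2
    · omega
    · push_cast; ring
  · rw [pow_mul_zpow_mul_mul_inv]
    congr 2
    · omega
    · push_cast; ring

section Operators

variable {n k : ℕ} {e : ℕ → ℕ → V}
  (b : Module.Basis {p : ℕ × ℕ // 1 ≤ p.1 ∧ p.1 < p.2 ∧ p.2 ≤ n + 1} R V)

lemma eq_swap_mul_of_dImage (hb : ∀ p, b p = e p.1.1 p.1.2) {t q x : Rˣ} (hx : x = t * q⁻¹)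
    {L D D' : Module.End R V}
    (hL : MapsBasisTo n e L (swapImage (x : R) (x * ((q⁻¹ : Rˣ) : R)) e (k + 1)))
    (hkn : k + 1 ≤ n) (hD : MapsBasisTo n e D (dImage t q e k))
    (hD' : MapsBasisTo n e D' (dImage t q e (k + 1))) :
    D' = L * D :=
  eq_of_mapsBasisTo b hb hD' fun i j hi hij hjn => by
    rw [Module.End.mul_apply, hD i j hi hij hjn, swap_dImage hx hL hkn hi hij hjn]

lemma swap_mul_eq_mul_sigma (hb : ∀ p, b p = e p.1.1 p.1.2) {x α ρ : R}
    {L M M' σ : Module.End R V} (hL : MapsBasisTo n e L (swapImage x ρ e (k + 1)))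
    (hM : MapsBasisTo n e M (mImage α e k)) (hM' : MapsBasisTo n e M' (mImage α e (k + 1)))
    (hσ : MapsBasisTo n e σ (sigmaImage x α ρ e (k + 1))) (hxα : x * α = x - 1)
    (hkn : k + 1 ≤ n) :
    L * M = M' * σ :=
  eq_of_mapsBasisTo b hb (f := fun i j => L (mImage α e k i j))
    (fun i j hi hij hjn => by rw [Module.End.mul_apply, hM i j hi hij hjn])
    (fun i j hi hij hjn => by
      rw [Module.End.mul_apply, hσ i j hi hij hjn,
        ← swap_mImage_eq_sigmaImage hL hM' hxα hkn hi hij hjn])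

end Operators

end LKB

open LKB in
theorem Dk_M0_eq_Mk_sigma_general {R : Type*} [CommRing R] (q t : Rˣ)
    (x : Rˣ) (hx : x = t * q⁻¹) (y : R) (hy : y = -((t⁻¹ : Rˣ) : R))
    (α : R) (hα : α = 1 - ((x⁻¹ : Rˣ) : R))
    {V : Type*} [AddCommGroup V] [Module R V]
    (n : ℕ)
    (e : ℕ → ℕ → V)
    (b : Module.Basis {p : ℕ × ℕ // 1 ≤ p.1 ∧ p.1 < p.2 ∧ p.2 ≤ n + 1} R V)
    (hb : ∀ p : {p : ℕ × ℕ // 1 ≤ p.1 ∧ p.1 < p.2 ∧ p.2 ≤ n + 1}, b p = e p.1.1 p.1.2)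
    (σ : ℕ → Module.End R V)
    (hσ : ∀ k i j, 1 ≤ k → k ≤ n → 1 ≤ i → i < j → j ≤ n + 1 →
      σ k (e i j) =
        if i = k + 1 then (x : R) • e k j + (1 - (x : R)) • e i j
        else if k = i ∧ i + 1 < j then
          e (i + 1) j - ((x : R) * y * ((x : R) - 1)) • e k (k + 1)
        else if k = i ∧ j = i + 1 then -(((x : R) ^ 2 * y) • e k (k + 1))
        else if i < k ∧ k + 1 < j then e i j - (y * ((x : R) - 1) ^ 2) • e k (k + 1)
        else if i < k ∧ k + 1 = j then
          e i (j - 1) - ((x : R) * y * ((x : R) - 1)) • e k (k + 1)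
        else if k = j then (x : R) • e i (j + 1) + (1 - (x : R)) • e i j
        else e i j)
    (M₀ : Module.End R V)
    (hM₀ : ∀ i j, 1 ≤ i → i < j → j ≤ n + 1 →
      M₀ (e i j) = e i j + ∑ s ∈ Finset.Icc (i + 1) (j - 1), α • e i s)
    (Mk : ℕ → Module.End R V)
    (hMk : ∀ k, 1 ≤ k → k ≤ n → ∀ i j, 1 ≤ i → i < j → j ≤ n + 1 →
      Mk k (e i j) = e i j
        + (∑ j' ∈ (Finset.Icc (i + 1) (j - 1)).filter (fun j' => j' ≠ k + 1), α • e i j')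
        + (if i ≤ k then ∑ j' ∈ Finset.Icc (k + 2) (j - 1), (α ^ 2) • e (k + 1) j' else 0)
        + (if i ≤ k ∧ k + 2 ≤ j then α • e (k + 1) j else 0))
    (Dk : ℕ → Module.End R V)
    (hDk : ∀ k, 1 ≤ k → k ≤ n → ∀ i j, 1 ≤ i → i < j → j ≤ n + 1 →
      Dk k (e i j) =
        if i = 1 ∧ k + 1 < j then e (k + 1) j
        else if i = 1 ∧ k + 1 = j then ((t * q⁻¹ * q⁻¹ : Rˣ) : R) • e k (k + 1)
        else if i = 1 ∧ j ≤ k then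
          ((t ^ (k + 2 - j) * q ^ ((j : ℤ) - (k : ℤ) - 3) : Rˣ) : R) • e (j - 1) (k + 1)
        else if i ≤ k ∧ j ≤ k + 1 then ((t * q⁻¹ : Rˣ) : R) • e (i - 1) (j - 1)
        else if i ≤ k ∧ k + 2 ≤ j then ((t * q⁻¹ : Rˣ) : R) • e (i - 1) j
        else if i = k + 1 then ((t * q⁻¹ : Rˣ) : R) • e (i - 1) j
        else e i j) :
    ∀ k, 1 ≤ k → k ≤ n → Dk k * M₀ = Mk k * compSeq σ 1 k := by
  subst hy hα
  have ht : ((t⁻¹ : Rˣ) : R) = ((x⁻¹ : Rˣ) : R) * ((q⁻¹ : Rˣ) : R) := by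
    rw [← Units.val_mul, hx, mul_inv, inv_inv, mul_inv_cancel_right]
  have hσ' (k : ℕ) (hk : 1 ≤ k) (hkn : k ≤ n) :
      MapsBasisTo n e (σ k)
        (sigmaImage (x : R) (1 - ((x⁻¹ : Rˣ) : R)) (x * ((q⁻¹ : Rˣ) : R)) e k) :=
    fun i j hi hij hjn => by
      rw [hσ k i j hk hkn hi hij hjn, sigmaImage, ht]
      simp only [sub_eq_add_neg (G := V), ← neg_smul, neg_sq_mul_neg_inv_mul,
        neg_mul_neg_inv_mul_mul_sub_one, neg_neg_inv_mul_mul_sub_one_sq]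
  have hM₀' : MapsBasisTo n e M₀ (mImage (1 - ((x⁻¹ : Rˣ) : R)) e 0) :=
    fun i j hi hij hjn => (hM₀ i j hi hij hjn).trans (mImage_zero hi).symm
  have hD₀ : MapsBasisTo n e (1 : Module.End R V) (dImage t q e 0) :=
    fun i j hi hij _ => (dImage_zero hi hij).symm
  choose L hL using fun k => exists_mapsBasisTo b hb (swapImage (x : R) (x * ((q⁻¹ : Rˣ) : R)) e k)
  have hxα := Units.val_mul_one_sub_val_inv x
  intro k hk hkn
  induction k, hk using Nat.le_induction with
  | base =>
    rw [eq_swap_mul_of_dImage b hb hx (hL 1) hkn hD₀ (hDk 1 le_rfl hkn), mul_one,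
      swap_mul_eq_mul_sigma b hb (hL 1) hM₀' (hMk 1 le_rfl hkn) (hσ' 1 le_rfl hkn) hxα hkn,
      compSeq_one_succ, compSeq, mul_one]
  | succ k hk ih =>
    rw [eq_swap_mul_of_dImage b hb hx (hL (k + 1)) hkn (hDk k hk (by omega))
        (hDk (k + 1) (by omega) hkn), mul_assoc, ih (by omega), ← mul_assoc,
      swap_mul_eq_mul_sigma b hb (hL (k + 1)) (hMk k hk (by omega)) (hMk (k + 1) (by omega) hkn)
        (hσ' (k + 1) (by omega) hkn) hxα hkn, compSeq_one_succ, mul_assoc]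

/-- With `x = t q⁻¹`, `y = -t⁻¹`, `α = 1 - x⁻¹`, the identification matrices `M_k`, the
partial Garside maps `D_k`, and the LKB generators `σ_k` satisfy
`D_k ∘ M_0 = M_k ∘ (σ_k ∘ ⋯ ∘ σ_1)` for every `1 ≤ k ≤ n`. -/
theorem Dk_M0_eq_Mk_sigma {R : Type*} [CommRing R] (q t : Rˣ)
    (x : Rˣ) (hx : x = t * q⁻¹) (y : R) (hy : y = -((t⁻¹ : Rˣ) : R))
    (α : R) (hα : α = 1 - ((x⁻¹ : Rˣ) : R))
    {V : Type*} [AddCommGroup V] [Module R V]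
    (n : ℕ) (hn : 1 ≤ n)
    (e : ℕ → ℕ → V)
    (b : Module.Basis {p : ℕ × ℕ // 1 ≤ p.1 ∧ p.1 < p.2 ∧ p.2 ≤ n + 1} R V)
    (hb : ∀ p : {p : ℕ × ℕ // 1 ≤ p.1 ∧ p.1 < p.2 ∧ p.2 ≤ n + 1}, b p = e p.1.1 p.1.2)
    (σ : ℕ → Module.End R V)
    (hσ : ∀ k i j, 1 ≤ k → k ≤ n → 1 ≤ i → i < j → j ≤ n + 1 →
      σ k (e i j) =
        if i = k + 1 then (x : R) • e k j + (1 - (x : R)) • e i j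
        else if k = i ∧ i + 1 < j then
          e (i + 1) j - ((x : R) * y * ((x : R) - 1)) • e k (k + 1)
        else if k = i ∧ j = i + 1 then -(((x : R) ^ 2 * y) • e k (k + 1))
        else if i < k ∧ k + 1 < j then e i j - (y * ((x : R) - 1) ^ 2) • e k (k + 1)
        else if i < k ∧ k + 1 = j then
          e i (j - 1) - ((x : R) * y * ((x : R) - 1)) • e k (k + 1)
        else if k = j then (x : R) • e i (j + 1) + (1 - (x : R)) • e i j
        else e i j)
    (M₀ : Module.End R V)
    (hM₀ : ∀ i j, 1 ≤ i → i < j → j ≤ n + 1 →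
      M₀ (e i j) = e i j + ∑ s ∈ Finset.Icc (i + 1) (j - 1), α • e i s)
    (Mk : ℕ → Module.End R V)
    (hMk : ∀ k, 1 ≤ k → k ≤ n → ∀ i j, 1 ≤ i → i < j → j ≤ n + 1 →
      Mk k (e i j) = e i j
        + (∑ j' ∈ (Finset.Icc (i + 1) (j - 1)).filter (fun j' => j' ≠ k + 1), α • e i j')
        + (if i ≤ k then ∑ j' ∈ Finset.Icc (k + 2) (j - 1), (α ^ 2) • e (k + 1) j' else 0)
        + (if i ≤ k ∧ k + 2 ≤ j then α • e (k + 1) j else 0))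
    (Dk : ℕ → Module.End R V)
    (hDk : ∀ k, 1 ≤ k → k ≤ n → ∀ i j, 1 ≤ i → i < j → j ≤ n + 1 →
      Dk k (e i j) =
        if i = 1 ∧ k + 1 < j then e (k + 1) j
        else if i = 1 ∧ k + 1 = j then ((t * q⁻¹ * q⁻¹ : Rˣ) : R) • e k (k + 1)
        else if i = 1 ∧ j ≤ k then
          ((t ^ (k + 2 - j) * q ^ ((j : ℤ) - (k : ℤ) - 3) : Rˣ) : R) • e (j - 1) (k + 1)
        else if i ≤ k ∧ j ≤ k + 1 then ((t * q⁻¹ : Rˣ) : R) • e (i - 1) (j - 1)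
        else if i ≤ k ∧ k + 2 ≤ j then ((t * q⁻¹ : Rˣ) : R) • e (i - 1) j
        else if i = k + 1 then ((t * q⁻¹ : Rˣ) : R) • e (i - 1) j
        else e i j) :
    ∀ k, 1 ≤ k → k ≤ n → Dk k * M₀ = Mk k * compSeq σ 1 k :=
  Dk_M0_eq_Mk_sigma_general q t x hx y hy α hα n e b hb σ hσ M₀ hM₀ Mk hMk Dk hDk
end

section
/- For every integer m with 1 ≤ m ≤ n−1, the endomorphisms U_m and U_{m+1} of V satisfy the braid relation: U_m ∘ U_{m+1} ∘ U_m = U_{m+1} ∘ U_m ∘ U_{m+1}. (Together with the commutation relations U_r ∘ U_s = U_s ∘ U_r for |r − s| ≥ 2, this yields a representation of the braid group B_{n+1} by generalized permutation matrices.) -/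
/-!
Each `U k` sends the line through `e i j` to the line through the pair obtained from `{i, j}` by
the transposition `(k k+1)`, so both sides of the braid relation move `e i j` along the same
permutation `s_m s_{m+1} s_m = s_{m+1} s_m s_{m+1}` of pairs and only the scalars need comparing.
Only the indices `m, m+1, m+2` matter: a pair avoiding them is fixed by everything, a pair
meeting them once picks up the same scalars in the same order on both sides, and for the three
pairs inside `{m, m+1, m+2}` the scalars agree up to order.
-/

section GenPermAction

variable {R V : Type*} [CommRing R] [AddCommGroup V] [Module R V]
  {q t : Rˣ} {n : ℕ} {e : ℕ → ℕ → V} {U : ℕ → Module.End R V} {i j k m : ℕ}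

variable (q t n e U) in
def IsGenPermAction : Prop :=
  ∀ m, 1 ≤ m → m ≤ n → ∀ i j, 1 ≤ i → i < j → j ≤ n + 1 →
    U m (e i j) =
      if i = m ∧ j = m + 1 then ((t * q⁻¹ * q⁻¹ : Rˣ) : R) • e m (m + 1)
      else if i = m ∧ m + 1 < j then e (m + 1) j
      else if i = m + 1 then ((t * q⁻¹ : Rˣ) : R) • e m j
      else if j = m then ((t * q⁻¹ : Rˣ) : R) • e i (m + 1)
      else if j = m + 1 then e i m
      else e i j

namespace IsGenPermAction

theorem apply_self_succ (hU : IsGenPermAction q t n e U) (hk : 1 ≤ k) (hkn : k ≤ n) :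
    U k (e k (k + 1)) = ((t * q⁻¹ * q⁻¹ : Rˣ) : R) • e k (k + 1) := by
  rw [hU k hk hkn k (k + 1) hk (by omega) (by omega), if_pos ⟨rfl, rfl⟩]

theorem apply_self_left (hU : IsGenPermAction q t n e U) (hk : 1 ≤ k) (hkn : k ≤ n)
    (hkj : k + 1 < j) (hj : j ≤ n + 1) : U k (e k j) = e (k + 1) j := by
  rw [hU k hk hkn k j hk (by omega) hj, if_neg (by omega), if_pos ⟨rfl, hkj⟩]

theorem apply_succ_left (hU : IsGenPermAction q t n e U) (hk : 1 ≤ k) (hkn : k ≤ n)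
    (hkj : k + 1 < j) (hj : j ≤ n + 1) :
    U k (e (k + 1) j) = ((t * q⁻¹ : Rˣ) : R) • e k j := by
  rw [hU k hk hkn (k + 1) j (by omega) hkj hj, if_neg (by omega), if_neg (by omega), if_pos rfl]

theorem apply_self_right (hU : IsGenPermAction q t n e U) (hkn : k ≤ n) (hi : 1 ≤ i)
    (hik : i < k) : U k (e i k) = ((t * q⁻¹ : Rˣ) : R) • e i (k + 1) := by
  rw [hU k (by omega) hkn i k hi hik (by omega), if_neg (by omega), if_neg (by omega),
    if_neg (by omega), if_pos rfl]

theorem apply_succ_right (hU : IsGenPermAction q t n e U) (hkn : k ≤ n) (hi : 1 ≤ i)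
    (hik : i < k) : U k (e i (k + 1)) = e i k := by
  rw [hU k (by omega) hkn i (k + 1) hi (by omega) (by omega), if_neg (by omega),
    if_neg (by omega), if_neg (by omega), if_neg (by omega), if_pos rfl]

theorem apply_of_ne (hU : IsGenPermAction q t n e U) (hk : 1 ≤ k) (hkn : k ≤ n) (hi : 1 ≤ i)
    (hij : i < j) (hj : j ≤ n + 1) (hik : i ≠ k) (hik' : i ≠ k + 1) (hjk : j ≠ k)
    (hjk' : j ≠ k + 1) : U k (e i j) = e i j := by
  rw [hU k hk hkn i j hi hij hj, if_neg (by omega), if_neg (by omega), if_neg (by omega),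
    if_neg (by omega), if_neg (by omega)]

variable (hU : IsGenPermAction q t n e U) (hm : 1 ≤ m) (hmn : m + 1 ≤ n)
include hU hm hmn

theorem braid_apply_of_disjoint (hi : 1 ≤ i) (hij : i < j) (hj : j ≤ n + 1)
    (hi' : i < m ∨ m + 2 < i) (hj' : j < m ∨ m + 2 < j) :
    (U m * U (m + 1) * U m) (e i j) = (U (m + 1) * U m * U (m + 1)) (e i j) := by
  have fix : ∀ k, m ≤ k → k ≤ m + 1 → U k (e i j) = e i j := fun k hk hk' =>
    hU.apply_of_ne (by omega) (by omega) hi hij hj (by omega) (by omega) (by omega) (by omega)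
  simp only [Module.End.mul_apply, fix m le_rfl (by omega), fix (m + 1) (by omega) le_rfl]

theorem braid_apply_below (hi : 1 ≤ i) (him : i < m) (hj : m ≤ j) (hj' : j ≤ m + 2) :
    (U m * U (m + 1) * U m) (e i j) = (U (m + 1) * U m * U (m + 1)) (e i j) := by
  obtain rfl | rfl | rfl : j = m ∨ j = m + 1 ∨ j = m + 2 := by omega
  all_goals
    simp (disch := omega) only [Module.End.mul_apply, hU.apply_self_right, hU.apply_succ_right,
      hU.apply_of_ne, map_smul]

theorem braid_apply_above (hi : m ≤ i) (hi' : i ≤ m + 2) (hj : m + 2 < j) (hjn : j ≤ n + 1) :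
    (U m * U (m + 1) * U m) (e i j) = (U (m + 1) * U m * U (m + 1)) (e i j) := by
  obtain rfl | rfl | rfl : i = m ∨ i = m + 1 ∨ i = m + 2 := by omega
  all_goals
    simp (disch := omega) only [Module.End.mul_apply, hU.apply_self_left, hU.apply_succ_left,
      hU.apply_of_ne, map_smul]

theorem braid_apply_inside (hi : m ≤ i) (hij : i < j) (hj : j ≤ m + 2) :
    (U m * U (m + 1) * U m) (e i j) = (U (m + 1) * U m * U (m + 1)) (e i j) := by
  obtain ⟨rfl, rfl⟩ | ⟨rfl, rfl⟩ | ⟨rfl, rfl⟩ :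
      i = m ∧ j = m + 1 ∨ i = m ∧ j = m + 2 ∨ i = m + 1 ∧ j = m + 2 := by omega
  all_goals
    simp (disch := omega) only [Module.End.mul_apply, hU.apply_self_succ, hU.apply_self_left,
      hU.apply_succ_left, hU.apply_self_right, hU.apply_succ_right, map_smul]
  all_goals module

theorem braid_apply (hi : 1 ≤ i) (hij : i < j) (hj : j ≤ n + 1) :
    (U m * U (m + 1) * U m) (e i j) = (U (m + 1) * U m * U (m + 1)) (e i j) := by
  by_cases hi' : i < m ∨ m + 2 < i <;> by_cases hj' : j < m ∨ m + 2 < j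
  · exact hU.braid_apply_of_disjoint hm hmn hi hij hj hi' hj'
  · exact hU.braid_apply_below hm hmn hi (by omega) (by omega) (by omega)
  · exact hU.braid_apply_above hm hmn (by omega) (by omega) (by omega) hj
  · exact hU.braid_apply_inside hm hmn (by omega) hij (by omega)

end IsGenPermAction

end GenPermAction

theorem U_braid_relation_general {R : Type*} [CommRing R] (q t : Rˣ)
    {V : Type*} [AddCommGroup V] [Module R V]
    (n : ℕ)
    (e : ℕ → ℕ → V)
    (b : Module.Basis {p : ℕ × ℕ // 1 ≤ p.1 ∧ p.1 < p.2 ∧ p.2 ≤ n + 1} R V)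
    (hb : ∀ p : {p : ℕ × ℕ // 1 ≤ p.1 ∧ p.1 < p.2 ∧ p.2 ≤ n + 1}, b p = e p.1.1 p.1.2)
    (U : ℕ → Module.End R V)
    (hU : ∀ m, 1 ≤ m → m ≤ n → ∀ i j, 1 ≤ i → i < j → j ≤ n + 1 →
      U m (e i j) =
        if i = m ∧ j = m + 1 then ((t * q⁻¹ * q⁻¹ : Rˣ) : R) • e m (m + 1)
        else if i = m ∧ m + 1 < j then e (m + 1) j
        else if i = m + 1 then ((t * q⁻¹ : Rˣ) : R) • e m j
        else if j = m then ((t * q⁻¹ : Rˣ) : R) • e i (m + 1)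
        else if j = m + 1 then e i m
        else e i j)
    (m : ℕ) (hm1 : 1 ≤ m) (hmn : m + 1 ≤ n) :
    U m * U (m + 1) * U m = U (m + 1) * U m * U (m + 1) :=
  b.ext fun ⟨⟨i, j⟩, hi, hij, hj⟩ => by
    rw [hb]
    exact IsGenPermAction.braid_apply hU hm1 hmn hi hij hj

/-- The generalized permutation endomorphisms `U_m` (obtained from the categorical
action by setting `α = 0` in the identification system) satisfy the braid relation
`U_m ∘ U_{m+1} ∘ U_m = U_{m+1} ∘ U_m ∘ U_{m+1}` for `1 ≤ m ≤ n - 1`. -/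
theorem U_braid_relation {R : Type*} [CommRing R] (q t : Rˣ)
    {V : Type*} [AddCommGroup V] [Module R V]
    (n : ℕ) (hn : 2 ≤ n)
    (e : ℕ → ℕ → V)
    (b : Module.Basis {p : ℕ × ℕ // 1 ≤ p.1 ∧ p.1 < p.2 ∧ p.2 ≤ n + 1} R V)
    (hb : ∀ p : {p : ℕ × ℕ // 1 ≤ p.1 ∧ p.1 < p.2 ∧ p.2 ≤ n + 1}, b p = e p.1.1 p.1.2)
    (U : ℕ → Module.End R V)
    (hU : ∀ m, 1 ≤ m → m ≤ n → ∀ i j, 1 ≤ i → i < j → j ≤ n + 1 →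
      U m (e i j) =
        if i = m ∧ j = m + 1 then ((t * q⁻¹ * q⁻¹ : Rˣ) : R) • e m (m + 1)
        else if i = m ∧ m + 1 < j then e (m + 1) j
        else if i = m + 1 then ((t * q⁻¹ : Rˣ) : R) • e m j
        else if j = m then ((t * q⁻¹ : Rˣ) : R) • e i (m + 1)
        else if j = m + 1 then e i m
        else e i j)
    (m : ℕ) (hm1 : 1 ≤ m) (hmn : m + 1 ≤ n) :
    U m * U (m + 1) * U m = U (m + 1) * U m * U (m + 1) :=
  U_braid_relation_general q t n e b hb U hU m hm1 hmn
end
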